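/- arXiv:2106.07376 — 10 statements merged into one kernel-verified Lean document; each statement's English description precedes it below -/
import Mathlib

section
/- The system {2 (mod 4), 4 (mod 8), 8 (mod 16), 8 (mod 24), 0 (mod 48), 1 (mod 3), 5 (mod 6), 3 (mod 12), 1 (mod 5), 7 (mod 10), 3 (mod 15), 9 (mod 20), 15 (mod 30)} is a covering system: every integer satisfies at least one of these congruences. -/
set_option maxHeartbeats 2000000 in
theorem stmt_1 :
    ∀ x : ℤ, x ≡ 2 [ZMOD 4] ∨ x ≡ 4 [ZMOD 8] ∨ x ≡ 8 [ZMOD 16] ∨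
      x ≡ 8 [ZMOD 24] ∨ x ≡ 0 [ZMOD 48] ∨ x ≡ 1 [ZMOD 3] ∨ x ≡ 5 [ZMOD 6] ∨
      x ≡ 3 [ZMOD 12] ∨ x ≡ 1 [ZMOD 5] ∨ x ≡ 7 [ZMOD 10] ∨ x ≡ 3 [ZMOD 15] ∨
      x ≡ 9 [ZMOD 20] ∨ x ≡ 15 [ZMOD 30] := by
  have H : ∀ r : ℤ, 0 ≤ r → r < 240 →
      (r ≡ 2 [ZMOD 4] ∨ r ≡ 4 [ZMOD 8] ∨ r ≡ 8 [ZMOD 16] ∨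
      r ≡ 8 [ZMOD 24] ∨ r ≡ 0 [ZMOD 48] ∨ r ≡ 1 [ZMOD 3] ∨ r ≡ 5 [ZMOD 6] ∨
      r ≡ 3 [ZMOD 12] ∨ r ≡ 1 [ZMOD 5] ∨ r ≡ 7 [ZMOD 10] ∨ r ≡ 3 [ZMOD 15] ∨
      r ≡ 9 [ZMOD 20] ∨ r ≡ 15 [ZMOD 30]) := by
    intro r h0 h1
    interval_cases r <;> decide
  intro x
  have key : ∀ n : ℤ, n ∣ 240 → x ≡ x % 240 [ZMOD n] := fun n hn =>
    (Int.emod_emod_of_dvd x hn).symm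
  have h0 : (0:ℤ) ≤ x % 240 := Int.emod_nonneg x (by norm_num)
  have h1 : x % 240 < 240 := Int.emod_lt_of_pos x (by norm_num)
  rcases H (x % 240) h0 h1 with h|h|h|h|h|h|h|h|h|h|h|h|h
  · exact Or.inl ((key 4 (by norm_num)).trans h)
  · exact Or.inr <| Or.inl ((key 8 (by norm_num)).trans h)
  · exact Or.inr <| Or.inr <| Or.inl ((key 16 (by norm_num)).trans h)
  · exact Or.inr <| Or.inr <| Or.inr <| Or.inl ((key 24 (by norm_num)).trans h)
  · exact Or.inr <| Or.inr <| Or.inr <| Or.inr <| Or.inl ((key 48 (by norm_num)).trans h)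
  · exact Or.inr <| Or.inr <| Or.inr <| Or.inr <| Or.inr <| Or.inl ((key 3 (by norm_num)).trans h)
  · exact Or.inr <| Or.inr <| Or.inr <| Or.inr <| Or.inr <| Or.inr <| Or.inl ((key 6 (by norm_num)).trans h)
  · exact Or.inr <| Or.inr <| Or.inr <| Or.inr <| Or.inr <| Or.inr <| Or.inr <| Or.inl ((key 12 (by norm_num)).trans h)
  · exact Or.inr <| Or.inr <| Or.inr <| Or.inr <| Or.inr <| Or.inr <| Or.inr <| Or.inr <| Or.inl ((key 5 (by norm_num)).trans h)
  · exact Or.inr <| Or.inr <| Or.inr <| Or.inr <| Or.inr <| Or.inr <| Or.inr <| Or.inr <| Or.inr <| Or.inl ((key 10 (by norm_num)).trans h)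
  · exact Or.inr <| Or.inr <| Or.inr <| Or.inr <| Or.inr <| Or.inr <| Or.inr <| Or.inr <| Or.inr <| Or.inr <| Or.inl ((key 15 (by norm_num)).trans h)
  · exact Or.inr <| Or.inr <| Or.inr <| Or.inr <| Or.inr <| Or.inr <| Or.inr <| Or.inr <| Or.inr <| Or.inr <| Or.inr <| Or.inl ((key 20 (by norm_num)).trans h)
  · exact Or.inr <| Or.inr <| Or.inr <| Or.inr <| Or.inr <| Or.inr <| Or.inr <| Or.inr <| Or.inr <| Or.inr <| Or.inr <| Or.inr ((key 30 (by norm_num)).trans h)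
end

section
/- Let n be a positive integer and d a proper divisor of n (d | n, d < n), and let p be a prime. If there exists an integer x with x ≠ 1 and x ≠ -1 such that p divides both Φ_d(x) and Φ_n(x), then p divides n/d. -/
open Polynomial

theorem stmt_4 (n d p : ℕ) (hn : 0 < n) (hd : d ∣ n) (hdn : d < n)
    (hp : p.Prime)
    (h : ∃ x : ℤ, x ≠ 1 ∧ x ≠ -1 ∧
      (p : ℤ) ∣ (cyclotomic d ℤ).eval x ∧ (p : ℤ) ∣ (cyclotomic n ℤ).eval x) :
    p ∣ n / d := by
  obtain ⟨x, -, -, hxd, hxn⟩ := h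
  haveI : Fact p.Prime := ⟨hp⟩
  have hd0 : 0 < d := Nat.pos_of_dvd_of_pos hd hn
  set μ : ZMod p := (x : ZMod p) with hμ
  have root : ∀ m : ℕ, (p : ℤ) ∣ (cyclotomic m ℤ).eval x →
      (cyclotomic m (ZMod p)).IsRoot μ := by
    intro m hm
    rw [IsRoot.def, hμ, ← map_cyclotomic_int m (ZMod p), eval_intCast_map]
    exact_mod_cast (ZMod.intCast_zmod_eq_zero_iff_dvd _ p).2 hm
  -- decompositions
  set k := n.factorization p with hk
  set j := d.factorization p with hj
  set m := n / p ^ k with hm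
  set m' := d / p ^ j with hm'
  have hnm : n = p ^ k * m := (Nat.ordProj_mul_ordCompl_eq_self n p).symm
  have hdm : d = p ^ j * m' := (Nat.ordProj_mul_ordCompl_eq_self d p).symm
  have hpm : ¬ p ∣ m := Nat.not_dvd_ordCompl hp hn.ne'
  have hpm' : ¬ p ∣ m' := Nat.not_dvd_ordCompl hp hd0.ne'
  haveI : NeZero ((m : ZMod p)) := ⟨fun H => hpm ((ZMod.natCast_eq_zero_iff m p).1 H)⟩
  haveI : NeZero ((m' : ZMod p)) := ⟨fun H => hpm' ((ZMod.natCast_eq_zero_iff m' p).1 H)⟩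
  have h1 : IsPrimitiveRoot μ m := by
    have := root n hxn
    rw [hnm] at this
    exact (isRoot_cyclotomic_prime_pow_mul_iff_of_charP).1 this
  have h2 : IsPrimitiveRoot μ m' := by
    have := root d hxd
    rw [hdm] at this
    exact (isRoot_cyclotomic_prime_pow_mul_iff_of_charP).1 this
  have hmm : m = m' := by rw [h1.eq_orderOf, h2.eq_orderOf]
  have hjk : j ≤ k := (Nat.factorization_le_iff_dvd hd0.ne' hn.ne').2 hd p
  have hm0 : 0 < m := Nat.ordCompl_pos p hn.ne'
  have hdiv : n / d = p ^ (k - j) := by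
    rw [hnm, hdm, ← hmm, ← Nat.pow_sub_mul_pow p hjk, mul_assoc,
      Nat.mul_div_cancel _ (Nat.mul_pos (pow_pos hp.pos j) hm0)]
  have hjk' : j < k := by
    rcases Nat.lt_or_ge j k with h | h
    · exact h
    · exfalso
      have : d = n := by rw [hnm, hdm, ← hmm, le_antisymm hjk h]
      omega
  rw [hdiv]
  exact dvd_pow_self p (Nat.sub_ne_zero_of_lt hjk')
end

section
/- Let a and b be positive integers with b a proper divisor of a, let p be a prime, and suppose there exists an integer x ∉ {1, -1} with p | gcd(Φ_a(x), Φ_b(x)). Write a = p^α m and b = p^β n with gcd(p, mn) = 1. Then m = n. -/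
open Polynomial

theorem stmt_6 (a b p : ℕ) (ha : 0 < a) (hb : 0 < b) (hba : b ∣ a) (hlt : b < a)
    (hp : p.Prime)
    (h : ∃ x : ℤ, x ≠ 1 ∧ x ≠ -1 ∧
      (p : ℤ) ∣ (cyclotomic a ℤ).eval x ∧ (p : ℤ) ∣ (cyclotomic b ℤ).eval x)
    (α β m n : ℕ) (hma : a = p ^ α * m) (hnb : b = p ^ β * n)
    (hcop : Nat.Coprime p (m * n)) :
    m = n := by
  haveI : Fact p.Prime := ⟨hp⟩
  obtain ⟨x, -, -, hxa, hxb⟩ := h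
  have hpm : ¬ p ∣ m := fun hd => hp.one_lt.ne'
    (Nat.eq_one_of_dvd_coprimes hcop (dvd_refl p) (hd.mul_right n))
  have hpn : ¬ p ∣ n := fun hd => hp.one_lt.ne'
    (Nat.eq_one_of_dvd_coprimes hcop (dvd_refl p) (hd.mul_left m))
  haveI hm : NeZero ((m : ZMod p)) := ⟨fun hz => hpm ((ZMod.natCast_eq_zero_iff m p).1 hz)⟩
  haveI hn : NeZero ((n : ZMod p)) := ⟨fun hz => hpn ((ZMod.natCast_eq_zero_iff n p).1 hz)⟩
  have key : ∀ (k c : ℕ), (p : ℤ) ∣ (cyclotomic (p ^ k * c) ℤ).eval x → [NeZero ((c : ZMod p))] →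
      IsPrimitiveRoot ((x : ZMod p)) c := by
    intro k c hdvd _
    have : (cyclotomic (p ^ k * c) (ZMod p)).IsRoot ((x : ZMod p)) := by
      have : (((cyclotomic (p ^ k * c) ℤ).eval x : ℤ) : ZMod p) = 0 := by
        rwa [ZMod.intCast_zmod_eq_zero_iff_dvd]
      rwa [← map_cyclotomic_int (p ^ k * c) (ZMod p), IsRoot.def, eval_intCast_map]
    exact isRoot_cyclotomic_prime_pow_mul_iff_of_charP.1 this
  have h1 := key α m (hma ▸ hxa)
  have h2 := key β n (hnb ▸ hxb)
  rw [h1.eq_orderOf, h2.eq_orderOf]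
end

section
/- Let n = q^α be a prime power with n ≥ 3, and let x ≥ 2 be an integer. If Φ_n(x) > q, then Φ_n(x) has a prime factor p with p ≠ q. -/
open Polynomial
open Finset

lemma aux_pow_sub_one (q : ℕ) (y : ℤ) (hdvd : (q:ℤ) ∣ y - 1) :
    ∀ i : ℕ, (q:ℤ)^2 ∣ (y^i - 1) - (y-1)*i := by
  intro i
  induction i with
  | zero => simp
  | succ i ih =>
    have key : (y^(i+1) - 1) - (y-1)*(i+1 : ℕ) =
        y * ((y^i - 1) - (y-1)*i) + (y-1)^2 * i := by push_cast; ring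
    rw [key]
    exact dvd_add (ih.mul_left y)
      ((pow_dvd_pow_of_dvd hdvd 2).mul_right _)

lemma aux_odd (q : ℕ) (hq : q.Prime) (hodd : q ≠ 2) (y : ℤ) :
    ¬ (q:ℤ)^2 ∣ ∑ i ∈ range q, y^i := by
  intro hc
  by_cases hdvd : (q:ℤ) ∣ y - 1
  · have h1 : (q:ℤ)^2 ∣ (∑ i ∈ range q, y^i) - (q:ℤ) - (y-1) * (∑ i ∈ range q, (i:ℤ)) := by
      have heq : (∑ i ∈ range q, y^i) - (q:ℤ) - (y-1) * (∑ i ∈ range q, (i:ℤ))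
          = ∑ i ∈ range q, ((y^i - 1) - (y-1)*i) := by
        rw [Finset.sum_sub_distrib, Finset.sum_sub_distrib, Finset.mul_sum]
        simp
      rw [heq]
      exact Finset.dvd_sum fun i _ => aux_pow_sub_one q y hdvd i
    have hqsum : (q:ℤ) ∣ ∑ i ∈ range q, (i:ℤ) := by
      rcases hq.odd_of_ne_two hodd with ⟨k, hk⟩
      have h2 : (∑ i ∈ range q, i) * 2 = (q * k) * 2 := by
        rw [Finset.sum_range_id_mul_two]
        have : q - 1 = 2 * k := by omega
        rw [this]; ring
      have h2' : (∑ i ∈ range q, i) = q * k := Nat.eq_of_mul_eq_mul_right two_pos h2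
      have : (q:ℤ) ∣ ((∑ i ∈ range q, i : ℕ) : ℤ) := by
        exact_mod_cast Dvd.intro k (by rw [h2'])
      simpa using this
    have h3 : (q:ℤ)^2 ∣ (y-1) * (∑ i ∈ range q, (i:ℤ)) := by
      rw [sq]; exact mul_dvd_mul hdvd hqsum
    have h4 : (q:ℤ)^2 ∣ (q:ℤ) := by
      have := dvd_sub hc (dvd_add h1 h3)
      simpa using this
    have h5 : (q:ℤ)^2 ≤ q := Int.le_of_dvd (by exact_mod_cast hq.pos) h4
    have hq2 : (2:ℤ) ≤ q := by exact_mod_cast hq.two_le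
    nlinarith
  · have hqS : (q:ℤ) ∣ ∑ i ∈ range q, y^i := dvd_trans (dvd_pow_self _ two_ne_zero) hc
    have h6 : (q:ℤ) ∣ y^q - 1 := by
      rw [← geom_sum_mul]
      exact hqS.mul_right _
    have hyq : (q:ℤ) ∣ y^q - y := by
      haveI := Fact.mk hq
      have h7 : ((y:ZMod q))^q = (y:ZMod q) := ZMod.pow_card _
      have h8 := sub_eq_zero.2 h7
      rwa [← Int.cast_pow, ← Int.cast_sub, ZMod.intCast_zmod_eq_zero_iff_dvd] at h8
    have h9 := dvd_sub hyq h6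
    have h10 : (y^q - y) - (y^q - 1) = -(y - 1) := by ring
    rw [h10] at h9
    exact hdvd ((dvd_neg).mp h9)

lemma aux_two (z : ℤ) : ¬ (4:ℤ) ∣ z^2 + 1 := by
  intro hc
  have h0 : ((z^2 + 1 : ℤ) : ZMod 4) = 0 :=
    (ZMod.intCast_zmod_eq_zero_iff_dvd (z^2+1) 4).2 (by exact_mod_cast hc)
  push_cast at h0
  have : ∀ a : ZMod 4, a^2 + 1 ≠ 0 := by decide
  exact this _ h0

lemma aux_not_sq_dvd (q α n : ℕ) (hq : q.Prime) (hα : 1 ≤ α) (hn : n = q ^ α)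
    (h3 : 3 ≤ n) (x : ℤ) : ¬ (q:ℤ)^2 ∣ (cyclotomic n ℤ).eval x := by
  obtain ⟨β, rfl⟩ : ∃ β, α = β + 1 := ⟨α - 1, by omega⟩
  have hcyc : (cyclotomic n ℤ).eval x = ∑ i ∈ Finset.range q, (x ^ q ^ β) ^ i := by
    rw [hn, cyclotomic_prime_pow_eq_geom_sum hq]
    simp [eval_finset_sum]
  rw [hcyc]
  by_cases h2 : q = 2
  · subst h2
    obtain ⟨γ, rfl⟩ : ∃ γ, β = γ + 1 := by
      refine ⟨β - 1, ?_⟩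
      rcases Nat.eq_zero_or_pos β with h | h
      · subst h; norm_num at hn; omega
      · omega
    intro hc
    have : ((2:ℤ))^2 ∣ (x ^ 2 ^ γ)^2 + 1 := by
      have he : ∑ i ∈ Finset.range 2, (x ^ 2 ^ (γ+1)) ^ i = (x ^ 2 ^ γ)^2 + 1 := by
        rw [Finset.sum_range_succ, Finset.sum_range_one, pow_succ, pow_mul]
        ring
      rw [he] at hc
      exact_mod_cast hc
    exact aux_two _ (by norm_num at this ⊢; exact_mod_cast this)
  · exact aux_odd q hq h2 _

theorem stmt_8 (q α n : ℕ) (hq : q.Prime) (hα : 1 ≤ α) (hn : n = q ^ α)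
    (h3 : 3 ≤ n) (x : ℤ) (hx : 2 ≤ x) (h : (q : ℤ) < (cyclotomic n ℤ).eval x) :
    ∃ p : ℕ, p.Prime ∧ p ≠ q ∧ (p : ℤ) ∣ (cyclotomic n ℤ).eval x := by
  by_contra hcon
  push_neg at hcon
  set N : ℤ := (cyclotomic n ℤ).eval x with hN
  have hNpos : 0 < N := lt_trans (by exact_mod_cast hq.pos) h
  have hmN : (N.natAbs : ℤ) = N := Int.natAbs_of_nonneg hNpos.le
  have huniq : ∀ {d : ℕ}, d.Prime → d ∣ N.natAbs → d = q := by
    intro d hd hdvd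
    by_contra hne
    exact hcon d hd hne (hmN ▸ Int.natCast_dvd_natCast.2 hdvd)
  obtain ⟨k, hk⟩ : ∃ k, N.natAbs = q ^ k :=
    ⟨_, Nat.eq_prime_pow_of_unique_prime_dvd (by positivity) huniq⟩
  have hk2 : 2 ≤ k := by
    have hqlt : (q:ℤ) < N := h
    have hq1 : 1 ≤ q := hq.pos
    by_contra hklt
    interval_cases k
    · rw [hk, pow_zero] at hmN; omega
    · rw [hk, pow_one] at hmN; omega
  have : (q:ℤ)^2 ∣ N := by
    rw [← hmN, hk]
    exact_mod_cast pow_dvd_pow (q:ℤ) hk2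
  exact aux_not_sq_dvd q α n hq hα hn h3 x this
end

section
/- Let n = q^α ≥ 3 be a prime power and x ≥ 2 an integer. Then q^2 does not divide Φ_n(x). -/
open Polynomial Finset

private lemma nilp_pow {R : Type*} [CommRing R] (c : R) (hc : c ^ 2 = 0) (i : ℕ) :
    (1 + c) ^ i = 1 + (i : R) * c := by
  induction i with
  | zero => simp
  | succ i ih =>
    rw [pow_succ, ih]
    push_cast
    linear_combination ((i : R)) * hc

private lemma odd_case (q : ℕ) (hq : q.Prime) (hodd : q ≠ 2) (y : ℤ) :
    ¬ ((q : ℤ) ^ 2 ∣ ∑ i ∈ Finset.range q, y ^ i) := by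
  intro h
  haveI : Fact q.Prime := ⟨hq⟩
  set S : ℤ := ∑ i ∈ Finset.range q, y ^ i with hS
  have hq1 : (q : ℤ) ∣ S := dvd_trans (dvd_pow_self _ two_ne_zero) h
  -- S * (y - 1) = y ^ q - 1
  have hgeom : S * (y - 1) = y ^ q - 1 := geom_sum_mul y q
  -- mod q : y ≡ 1
  have hy1 : (q : ℤ) ∣ y - 1 := by
    rw [← ZMod.intCast_zmod_eq_zero_iff_dvd]
    have h0 : ((S : ZMod q)) = 0 := by
      rw [ZMod.intCast_zmod_eq_zero_iff_dvd]; exact hq1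
    have := congrArg (fun z : ℤ => ((z : ZMod q))) hgeom
    push_cast at this
    rw [h0, zero_mul] at this
    have hp : ((y : ℤ) : ZMod q) ^ q = ((y : ℤ) : ZMod q) := ZMod.pow_card _
    push_cast
    linear_combination -this - hp
  obtain ⟨t, ht⟩ := hy1
  have hy : y = 1 + q * t := by linarith
  -- now mod q^2
  have hc : ((q : ZMod (q ^ 2)) * (t : ZMod (q ^ 2))) ^ 2 = 0 := by
    have hq2 : ((q : ZMod (q ^ 2))) ^ 2 = 0 := by
      have : (((q ^ 2 : ℕ) : ZMod (q ^ 2))) = 0 := ZMod.natCast_self _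
      push_cast at this
      exact this
    rw [mul_pow, hq2, zero_mul]
  have hS0 : ((S : ZMod (q ^ 2))) = 0 := by
    rw [ZMod.intCast_zmod_eq_zero_iff_dvd]
    push_cast
    exact h
  set c : ZMod (q ^ 2) := (q : ZMod (q ^ 2)) * (t : ZMod (q ^ 2)) with hcdef
  have hSc : ((S : ZMod (q ^ 2))) = (q : ZMod (q ^ 2)) + (∑ i ∈ Finset.range q, (i : ZMod (q ^ 2))) * c := by
    rw [hS]
    push_cast
    rw [Finset.sum_congr rfl (fun i _ => by
      rw [show ((y : ZMod (q ^ 2))) = 1 + c by rw [hy]; push_cast; ring, nilp_pow c hc i])]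
    rw [Finset.sum_add_distrib, Finset.sum_const, ← Finset.sum_mul]
    simp [mul_comm]
  -- 2 * S = 2 * q in ZMod (q^2)
  have hqc : (q : ZMod (q ^ 2)) * c = 0 := by
    rw [hcdef, ← mul_assoc, ← sq]
    rw [show ((q : ZMod (q ^ 2))) ^ 2 = 0 from by
      have : (((q ^ 2 : ℕ) : ZMod (q ^ 2))) = 0 := ZMod.natCast_self _
      push_cast at this; exact this]
    rw [zero_mul]
  have hsum : ((∑ i ∈ Finset.range q, (i : ZMod (q ^ 2)))) * 2 = (q : ZMod (q ^ 2)) * ((q : ZMod (q ^ 2)) - 1) := by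
    have h2 := congrArg (Nat.cast : ℕ → ZMod (q ^ 2)) (Finset.sum_range_id_mul_two q)
    push_cast [Nat.cast_sub hq.one_le] at h2
    exact h2
  -- conclude (2*q : ZMod (q^2)) = 0
  have hfin : (((2 * q : ℕ) : ZMod (q ^ 2))) = 0 := by
    push_cast
    have := congrArg (fun z => 2 * z) hSc
    simp only [hS0, mul_zero] at this
    have h2S : (0 : ZMod (q ^ 2)) = 2 * (q : ZMod (q ^ 2))
        + ((∑ i ∈ Finset.range q, (i : ZMod (q ^ 2))) * 2) * c := by
      rw [this]; ring
    rw [hsum] at h2S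
    have hre : (q : ZMod (q ^ 2)) * ((q : ZMod (q ^ 2)) - 1) * c
        = ((q : ZMod (q ^ 2)) - 1) * ((q : ZMod (q ^ 2)) * c) := by ring
    rw [hre, hqc, mul_zero, add_zero] at h2S
    linear_combination -h2S
  rw [ZMod.natCast_eq_zero_iff] at hfin
  have hqdvd : q ∣ 2 := by
    have h4 := hfin
    rw [pow_two, mul_comm 2 q] at h4
    exact (mul_dvd_mul_iff_left (a := q) (by exact_mod_cast hq.pos.ne')).mp h4
  exact hodd ((Nat.prime_dvd_prime_iff_eq hq Nat.prime_two).mp hqdvd)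

theorem stmt_9 (q α n : ℕ) (hq : q.Prime) (hα : 1 ≤ α) (hn : n = q ^ α)
    (h3 : 3 ≤ n) (x : ℤ) (hx : 2 ≤ x) :
    ¬ ((q : ℤ) ^ 2 ∣ (cyclotomic n ℤ).eval x) := by
  obtain ⟨β, rfl⟩ : ∃ β, α = β + 1 := ⟨α - 1, by omega⟩
  subst hn
  rw [cyclotomic_prime_pow_eq_geom_sum hq]
  simp only [eval_finset_sum, eval_pow, eval_X]
  by_cases hq2 : q = 2
  · subst hq2
    have hβ : 1 ≤ β := by
      by_contra hβ
      interval_cases β <;> omega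
    obtain ⟨γ, rfl⟩ : ∃ γ, β = γ + 1 := ⟨β - 1, by omega⟩
    intro h
    have hsum : ∑ i ∈ Finset.range 2, (x ^ 2 ^ (γ + 1)) ^ i = 1 + (x ^ 2 ^ γ) ^ 2 := by
      have hx2 : x ^ 2 ^ (γ + 1) = (x ^ 2 ^ γ) ^ 2 := by rw [← pow_mul, ← pow_succ]
      rw [Finset.sum_range_succ, Finset.sum_range_one, pow_zero, pow_one, hx2]
    rw [hsum] at h
    have h4 : (((1 + (x ^ 2 ^ γ) ^ 2 : ℤ)) : ZMod 4) = 0 := by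
      rw [ZMod.intCast_zmod_eq_zero_iff_dvd]
      exact_mod_cast h
    push_cast at h4
    revert h4
    generalize ((x : ZMod 4) ^ 2 ^ γ) = z
    revert z
    decide
  · exact odd_case q hq hq2 (x ^ q ^ β)
end

section
/- Let p and q be distinct primes, α, β ≥ 1, and n = p^α q^β. For any integer x ≥ 2, neither p^2 nor q^2 divides Φ_n(x). -/
/-!
If `p` is odd and `n = p * m`, then `Φₙ ∣ 1 + X ^ m + ⋯ + (X ^ m) ^ (p - 1)`, and `p` divides
`1 + y + ⋯ + y ^ (p - 1)` only when `y ≡ 1 [ZMOD p]`, in which case it divides it exactly once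
(lifting the exponent). For `p = 2`, `Φₙ(x)` is odd because `n` is not a prime power:
`Φₙ(x) ≡ Φₙ(0) = 1` or `Φₙ(x) ≡ Φₙ(1) = 1 [ZMOD 2]`.
-/

open Polynomial Finset

theorem Int.not_sq_dvd_geom_sum {p : ℕ} (hp : p.Prime) (hp1 : Odd p) (y : ℤ) :
    ¬ (p : ℤ) ^ 2 ∣ ∑ i ∈ Finset.range p, y ^ i := by
  intro h
  have hS : (p : ℤ) ∣ ∑ i ∈ Finset.range p, y ^ i := (dvd_pow_self _ two_ne_zero).trans h
  -- `(∑ y ^ i) * (y - 1) = y ^ p - 1` and Fermat's `y ^ p ≡ y` give `y ≡ 1 [ZMOD p]`.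
  have hy : (p : ℤ) ∣ y - 1 := by
    have h1 : (p : ℤ) ∣ y ^ p - 1 := geom_sum_mul y p ▸ hS.mul_right _
    have h2 : (p : ℤ) ∣ y ^ p - y := (Int.ModEq.pow_prime_eq_self hp y).symm.dvd
    simpa using dvd_sub h1 h2
  have hpy : ¬ (p : ℤ) ∣ y := fun hpy =>
    hp.ne_one (Nat.dvd_one.1 (Int.natCast_dvd_natCast.1 (by simpa using dvd_sub hpy hy)))
  have hv := emultiplicity_geom_sum₂_eq_one (Nat.prime_iff_prime_int.1 hp) hp1 hy hpy
  simp only [one_pow, mul_one] at hv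
  exact absurd (pow_dvd_iff_le_emultiplicity.1 h) (by rw [hv]; norm_num)

theorem cyclotomic_mul_dvd_geom_sum (R : Type*) [CommRing R] {k m : ℕ} (hk : 1 < k)
    (hm : m ≠ 0) : cyclotomic (k * m) R ∣ ∑ i ∈ range k, (X ^ m) ^ i := by
  have hmem : m ∈ (k * m).properDivisors :=
    Nat.mem_properDivisors.2 ⟨dvd_mul_left m k, lt_mul_left (Nat.pos_of_ne_zero hm) hk⟩
  obtain ⟨c, hc⟩ := X_pow_sub_one_mul_cyclotomic_dvd_X_pow_sub_one_of_dvd R hmem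
  refine ⟨c, (monic_X_pow_sub_C (1 : R) hm).isRegular.left ?_⟩
  simp only [C_1]
  rw [mul_comm, geom_sum_mul, ← pow_mul, mul_comm m k, hc, mul_assoc]

theorem Int.two_not_dvd_eval_cyclotomic {n : ℕ} (hn : 1 < n) (hnpp : ¬ IsPrimePow n) (x : ℤ) :
    ¬ 2 ∣ (cyclotomic n ℤ).eval x := by
  have h1 : (cyclotomic n ℤ).eval 1 = 1 := eval_one_cyclotomic_not_prime_pow fun hp k hk => by
    rcases k.eq_zero_or_pos with rfl | hk0
    · exact hn.ne (by simpa using hk)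
    · exact hnpp ⟨_, k, hp.prime, hk0, hk⟩
  have h0 : (cyclotomic n ℤ).eval 0 = 1 := by
    rw [← coeff_zero_eq_eval_zero, cyclotomic_coeff_zero ℤ hn]
  intro h2
  have : (2 : ℤ) ∣ (cyclotomic n ℤ).eval x - 1 := by
    rcases Int.even_or_odd x with hx | hx
    · have := sub_dvd_eval_sub x 0 (cyclotomic n ℤ)
      rw [sub_zero, h0] at this
      exact (even_iff_two_dvd.1 hx).trans this
    · have := sub_dvd_eval_sub x 1 (cyclotomic n ℤ)
      rw [h1] at this
      exact (even_iff_two_dvd.1 (hx.sub_odd odd_one)).trans this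
  exact absurd (by simpa using dvd_sub h2 this) (by decide : ¬ (2 : ℤ) ∣ 1)

theorem Int.not_sq_dvd_eval_cyclotomic {p n : ℕ} (hp : p.Prime) (hpn : p ∣ n)
    (hn : ¬ IsPrimePow n) (hn0 : n ≠ 0) (x : ℤ) : ¬ (p : ℤ) ^ 2 ∣ (cyclotomic n ℤ).eval x := by
  rcases hp.eq_two_or_odd' with rfl | hodd
  · have hn1 : 1 < n := Nat.le_of_dvd (Nat.pos_of_ne_zero hn0) hpn
    exact fun h => two_not_dvd_eval_cyclotomic hn1 hn x
      ((dvd_pow_self 2 two_ne_zero).trans (by exact_mod_cast h))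
  · obtain ⟨m, rfl⟩ := hpn
    have hdvd := eval_dvd (x := x)
      (cyclotomic_mul_dvd_geom_sum ℤ hp.one_lt (right_ne_zero_of_mul hn0))
    simp only [eval_finsetSum, eval_pow, eval_X] at hdvd
    exact fun h => not_sq_dvd_geom_sum hp hodd (x ^ m) (h.trans hdvd)

theorem not_isPrimePow_of_dvd_of_dvd {p q n : ℕ} (hp : p.Prime) (hq : q.Prime) (hpq : p ≠ q)
    (hpn : p ∣ n) (hqn : q ∣ n) : ¬ IsPrimePow n := by
  rw [isPrimePow_iff_unique_prime_dvd]
  rintro ⟨r, -, hr⟩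
  exact hpq ((hr p ⟨hp, hpn⟩).trans (hr q ⟨hq, hqn⟩).symm)

theorem stmt_10_general (p q α β n : ℕ) (hp : p.Prime) (hq : q.Prime) (hpq : p ≠ q)
    (hα : 1 ≤ α) (hβ : 1 ≤ β) (hn : n = p ^ α * q ^ β) (x : ℤ) :
    ¬ ((p : ℤ) ^ 2 ∣ (cyclotomic n ℤ).eval x) ∧
      ¬ ((q : ℤ) ^ 2 ∣ (cyclotomic n ℤ).eval x) := by
  have hpn : p ∣ n := hn ▸ (dvd_pow_self p (by omega)).mul_right _
  have hqn : q ∣ n := hn ▸ (dvd_pow_self q (by omega)).mul_left _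
  have hn0 : n ≠ 0 := hn ▸ mul_ne_zero (pow_ne_zero _ hp.ne_zero) (pow_ne_zero _ hq.ne_zero)
  have hnpp := not_isPrimePow_of_dvd_of_dvd hp hq hpq hpn hqn
  exact ⟨Int.not_sq_dvd_eval_cyclotomic hp hpn hnpp hn0 x,
    Int.not_sq_dvd_eval_cyclotomic hq hqn hnpp hn0 x⟩

theorem stmt_10 (p q α β n : ℕ) (hp : p.Prime) (hq : q.Prime) (hpq : p ≠ q)
    (hα : 1 ≤ α) (hβ : 1 ≤ β) (hn : n = p ^ α * q ^ β) (x : ℤ) (hx : 2 ≤ x) :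
    ¬ ((p : ℤ) ^ 2 ∣ (cyclotomic n ℤ).eval x) ∧
      ¬ ((q : ℤ) ^ 2 ∣ (cyclotomic n ℤ).eval x) :=
  stmt_10_general p q α β n hp hq hpq hα hβ hn x
end

section
/- Let p and q be distinct primes, α, β ≥ 1, and n = p^α q^β. For any integer x ≥ 2, if Φ_n(x) > pq, then Φ_n(x) has a prime factor r with r ≠ p and r ≠ q. -/
/-!
Let `r ∈ {p, q}` be a prime dividing `E = Φ_n(x)` and write `n = r ^ k * m` with `r ∤ m`, `m > 1`.
Modulo `r`, `Φ_n ≡ Φ_m ^ (r ^ k - r ^ (k - 1))`, so `x` is a primitive `m`-th root of unity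
mod `r`; hence `m ∣ r - 1` and `r` is odd. With `y = x ^ (n / r) ≡ 1 (mod r)`, `E` divides
`1 + y + ⋯ + y ^ (r - 1) ≡ r (mod r ^ 2)`, so `r ^ 2 ∤ E`. If `E` had no prime factor besides
`p` and `q`, it would thus divide `p * q`, contradicting `E > p * q`.
-/

open Polynomial Finset

theorem isPrimitiveRoot_of_prime_dvd_eval_cyclotomic {r m k : ℕ} [Fact r.Prime] (hrm : ¬ r ∣ m)
    {x : ℤ} (hdvd : (r : ℤ) ∣ (cyclotomic (r ^ k * m) ℤ).eval x) :
    IsPrimitiveRoot (x : ZMod r) m := by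
  have : NeZero (m : ZMod r) := NeZero.of_not_dvd _ hrm
  rw [← isRoot_cyclotomic_prime_pow_mul_iff_of_charP (k := k), IsRoot.def,
    ← map_cyclotomic_int, eval_intCast_map, eq_intCast]
  exact (ZMod.intCast_zmod_eq_zero_iff_dvd _ _).mpr hdvd

theorem dvd_sub_one_of_prime_dvd_eval_cyclotomic {r m k : ℕ} (hr : r.Prime) (hrm : ¬ r ∣ m)
    {x : ℤ} (hdvd : (r : ℤ) ∣ (cyclotomic (r ^ k * m) ℤ).eval x) : m ∣ r - 1 := by
  have := Fact.mk hr
  have hζ := isPrimitiveRoot_of_prime_dvd_eval_cyclotomic hrm hdvd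
  have hm : m ≠ 0 := by rintro rfl; exact hrm (dvd_zero r)
  rw [hζ.eq_orderOf]
  exact ZMod.orderOf_dvd_card_sub_one (hζ.ne_zero hm)

theorem eval_cyclotomic_mul_dvd_geom_sum {R : Type*} [CommRing R] [IsDomain R] {d r : ℕ}
    (hd : 0 < d) (hr : 1 < r) {x : R} (hx : x ^ d ≠ 1) :
    (cyclotomic (d * r) R).eval x ∣ ∑ i ∈ range r, (x ^ d) ^ i := by
  have hdn : d ∈ (d * r).properDivisors :=
    Nat.mem_properDivisors.mpr ⟨dvd_mul_right d r, lt_mul_of_one_lt_right hd hr⟩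
  have := eval_dvd (x := x) (X_pow_sub_one_mul_cyclotomic_dvd_X_pow_sub_one_of_dvd R hdn)
  simp only [eval_mul, eval_sub, eval_pow, eval_X, eval_one] at this
  rw [pow_mul, ← geom_sum_mul (x ^ d) r, mul_comm _ (x ^ d - 1)] at this
  exact (mul_dvd_mul_iff_left (sub_ne_zero.mpr hx)).mp this

theorem not_sq_dvd_eval_cyclotomic_prime_pow_mul {r m k : ℕ} (hr : r.Prime) (hrm : ¬ r ∣ m)
    (hm : 1 < m) (hk : 0 < k) {x : ℤ} (hx : 1 < x) :
    ¬ (r : ℤ) ^ 2 ∣ (cyclotomic (r ^ k * m) ℤ).eval x := by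
  intro hsq
  have := Fact.mk hr
  have hdvd : (r : ℤ) ∣ (cyclotomic (r ^ k * m) ℤ).eval x := (dvd_pow_self _ two_ne_zero).trans hsq
  have hodd : Odd r := by
    have hm_le : m ≤ r - 1 := Nat.le_of_dvd (by have := hr.two_le; omega)
      (dvd_sub_one_of_prime_dvd_eval_cyclotomic hr hrm hdvd)
    exact hr.odd_of_ne_two (by omega)
  set d := r ^ (k - 1) * m
  have hn : r ^ k * m = d * r := by
    rw [← Nat.sub_add_cancel hk, pow_succ]; ring
  have hd : 0 < d := Nat.mul_pos (pow_pos hr.pos _) (by omega)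
  have hxd : x ^ d ≠ 1 := (one_lt_pow₀ hx hd.ne').ne'
  obtain ⟨b, hb⟩ : (r : ℤ) ∣ x ^ d - 1 := by
    rw [← ZMod.intCast_zmod_eq_zero_iff_dvd]
    push_cast
    rw [pow_mul', (isPrimitiveRoot_of_prime_dvd_eval_cyclotomic hrm hdvd).pow_eq_one, one_pow,
      sub_self]
  -- the geometric sum of `x ^ d = 1 + r b` over `range r` is `r` modulo `r ^ 2`
  have hgeom := odd_sq_dvd_geom_sum₂_sub (R := ℤ) 1 b hodd
  simp only [one_pow, mul_one, ← hb, add_sub_cancel] at hgeom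
  have hsum := hsq.trans (hn ▸ eval_cyclotomic_mul_dvd_geom_sum hd hr.one_lt hxd)
  have : r ^ 2 ∣ r ^ 1 := by
    rw [pow_one, ← Int.natCast_dvd_natCast]
    simpa using hsum.sub hgeom
  exact absurd ((Nat.pow_dvd_pow_iff_le_right hr.one_lt).mp this) (by norm_num)

theorem Int.natAbs_dvd_prod_of_forall_prime {a : ℤ} {s : Finset ℕ}
    (hsq : ∀ t : ℕ, t.Prime → ¬ (t : ℤ) ^ 2 ∣ a) (hs : ∀ t : ℕ, t.Prime → (t : ℤ) ∣ a → t ∈ s) :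
    a.natAbs ∣ ∏ t ∈ s, t := by
  have hsqf : Squarefree a.natAbs := Nat.squarefree_iff_prime_squarefree.mpr fun t ht htt => by
    rw [← sq, ← Int.natCast_dvd, Nat.cast_pow] at htt
    exact hsq t ht htt
  rw [← Nat.prod_primeFactors_of_squarefree hsqf]
  refine prod_dvd_prod_of_subset _ _ _ fun t ht => ?_
  obtain ⟨ht, hta, _⟩ := Nat.mem_primeFactors.mp ht
  exact hs t ht (Int.natCast_dvd.mpr hta)

theorem stmt_11 (p q α β n : ℕ) (hp : p.Prime) (hq : q.Prime) (hpq : p ≠ q)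
    (hα : 1 ≤ α) (hβ : 1 ≤ β) (hn : n = p ^ α * q ^ β) (x : ℤ) (hx : 2 ≤ x)
    (h : ((p : ℤ) * q) < (cyclotomic n ℤ).eval x) :
    ∃ r : ℕ, r.Prime ∧ r ≠ p ∧ r ≠ q ∧ (r : ℤ) ∣ (cyclotomic n ℤ).eval x := by
  set E := (cyclotomic n ℤ).eval x with hE
  by_contra! hcon
  have hall (t : ℕ) (ht : t.Prime) (htE : (t : ℤ) ∣ E) : t = p ∨ t = q := by
    by_contra! hne
    exact hcon t ht hne.1 hne.2 htE
  have hcop : p.Coprime q := (Nat.coprime_primes hp hq).mpr hpq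
  have hp_sq : ¬ (p : ℤ) ^ 2 ∣ E := by
    rw [hE, hn]
    exact not_sq_dvd_eval_cyclotomic_prime_pow_mul hp (hp.coprime_iff_not_dvd.mp (hcop.pow_right β))
      (Nat.one_lt_pow (by omega) hq.one_lt) hα hx
  have hq_sq : ¬ (q : ℤ) ^ 2 ∣ E := by
    rw [hE, hn, mul_comm]
    exact not_sq_dvd_eval_cyclotomic_prime_pow_mul hq
      (hq.coprime_iff_not_dvd.mp (hcop.symm.pow_right α)) (Nat.one_lt_pow (by omega) hp.one_lt) hβ
      hx
  have hdvd : E.natAbs ∣ ∏ t ∈ {p, q}, t := by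
    refine Int.natAbs_dvd_prod_of_forall_prime (fun t ht htt => ?_) fun t ht htE => by
      simpa using hall t ht htE
    rcases hall t ht ((dvd_pow_self _ two_ne_zero).trans htt) with rfl | rfl
    exacts [hp_sq htt, hq_sq htt]
  rw [prod_pair hpq] at hdvd
  have hle : E ≤ p * q := by
    rw [← Int.natAbs_of_nonneg (lt_of_le_of_lt (by positivity) h).le]
    exact_mod_cast Nat.le_of_dvd (Nat.mul_pos hp.pos hq.pos) hdvd
  omega
end

section
/- For any integer m > 1, there exist infinitely many positive integers k such that k ≢ -1 (mod q) for every prime q dividing m - 1, and k·m^n + 1 is composite for every positive integer n. -/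
/-!
Sierpiński's covering argument. Take congruences `n ≡ aᵢ (mod dᵢ)` with distinct moduli covering
all of `ℕ`, and for each `i` a prime `pᵢ` modulo which `m` has order exactly `dᵢ` (a primitive
prime divisor of `m ^ dᵢ - 1`). Distinct orders make the `pᵢ` distinct, so by the Chinese
remainder theorem there is an arithmetic progression of multiples `k` of `m - 1` with
`k * m ^ aᵢ ≡ -1 (mod pᵢ)` for every `i`; then each `k * m ^ n + 1` is a proper multiple of some
`pᵢ`, and `k ≡ 0` rules out `k ≡ -1` modulo the primes dividing `m - 1`.

The moduli used are `d = 2 ^ a * 3 ^ b ≥ 3`. Then `Φ_d(m)` is `y ^ 2 + 1`, `y ^ 2 + y + 1` or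
`y ^ 2 - y + 1` for a power `y` of `m`; it is divisible by neither `4` nor `9`, so it has a prime
factor `p ∤ 6`, hence `p ∤ d`, and `m` is a primitive `d`-th root of unity modulo `p`.
-/

open Function Polynomial

namespace Polynomial

theorem cyclotomic_mul_eq_expand (R : Type*) [CommRing R] {n e : ℕ} (he0 : e ≠ 0)
    (he : ∀ q : ℕ, q.Prime → q ∣ e → q ∣ n) :
    cyclotomic (n * e) R = expand R e (cyclotomic n R) := by
  induction e using Nat.recOnMul generalizing n with
  | zero => exact absurd rfl he0
  | one => simp
  | prime q hq => rw [cyclotomic_expand_eq_cyclotomic hq (he q hq dvd_rfl)]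
  | mul a b iha ihb =>
    rw [← mul_assoc, ihb (right_ne_zero_of_mul he0) fun q hq hqb => ?_,
      iha (left_ne_zero_of_mul he0) fun q hq hqa => he q hq (dvd_mul_of_dvd_left hqa b),
      ← expand_mul, mul_comm]
    exact (he q hq (dvd_mul_of_dvd_right hqb a)).trans (dvd_mul_right n a)

theorem orderOf_eq_of_dvd_eval_cyclotomic {p d : ℕ} [Fact p.Prime] {m : ℤ}
    (hdvd : (p : ℤ) ∣ (cyclotomic d ℤ).eval m) (hpd : ¬ p ∣ d) :
    orderOf (m : ZMod p) = d := by
  have : NeZero (d : ZMod p) := ⟨by rwa [Ne, ZMod.natCast_eq_zero_iff]⟩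
  have hroot : (cyclotomic d (ZMod p)).IsRoot (m : ZMod p) := by
    rwa [← map_cyclotomic_int, IsRoot, eval_intCast_map, eq_intCast,
      ZMod.intCast_zmod_eq_zero_iff_dvd]
  exact (isRoot_cyclotomic_iff.mp hroot).eq_orderOf.symm

end Polynomial

theorem Int.exists_prime_ne_dvd_of_not_sq_dvd {q : ℕ} {N : ℤ} (hq : q.Prime) (hqN : q < N)
    (hsq : ¬ (q : ℤ) ^ 2 ∣ N) : ∃ p : ℕ, p.Prime ∧ (p : ℤ) ∣ N ∧ p ≠ q := by
  lift N to ℕ using by omega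
  by_contra! h
  have hN := Nat.eq_prime_pow_of_unique_prime_dvd (p := q) (n := N) (by omega)
    fun hp hd => h _ hp (by exact_mod_cast hd)
  have hk : N.primeFactorsList.length ≤ 1 := by
    by_contra! hk
    have hsq : ¬ q ^ 2 ∣ N := by exact_mod_cast hsq
    rw [hN] at hsq
    exact hsq (pow_dvd_pow q hk)
  have : N ≤ q := calc
    N = q ^ N.primeFactorsList.length := hN
    _ ≤ q ^ 1 := Nat.pow_le_pow_right hq.pos hk
    _ = q := pow_one q
  omega

theorem exists_prime_dvd_sq_add_one {y : ℤ} (hy : 2 ≤ y) :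
    ∃ p : ℕ, p.Prime ∧ p ≠ 2 ∧ p ≠ 3 ∧ (p : ℤ) ∣ y ^ 2 + 1 := by
  have h4 : ¬ ((2 : ℕ) : ℤ) ^ 2 ∣ y ^ 2 + 1 := by
    rw [← Nat.cast_pow, ← ZMod.intCast_zmod_eq_zero_iff_dvd]; push_cast
    generalize (y : ZMod 4) = z; revert z; decide
  have h3 : ¬ ((3 : ℕ) : ℤ) ∣ y ^ 2 + 1 := by
    rw [← ZMod.intCast_zmod_eq_zero_iff_dvd]; push_cast
    generalize (y : ZMod 3) = z; revert z; decide
  obtain ⟨p, hp, hpN, hp2⟩ := Int.exists_prime_ne_dvd_of_not_sq_dvd Nat.prime_two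
    (by push_cast; nlinarith) h4
  exact ⟨p, hp, hp2, by rintro rfl; exact h3 hpN, hpN⟩

theorem exists_prime_dvd_sq_add_add_one {y : ℤ} (hy : 2 ≤ y) :
    ∃ p : ℕ, p.Prime ∧ p ≠ 2 ∧ p ≠ 3 ∧ (p : ℤ) ∣ y ^ 2 + y + 1 := by
  have h9 : ¬ ((3 : ℕ) : ℤ) ^ 2 ∣ y ^ 2 + y + 1 := by
    rw [← Nat.cast_pow, ← ZMod.intCast_zmod_eq_zero_iff_dvd]; push_cast
    generalize (y : ZMod 9) = z; revert z; decide
  have h2 : ¬ ((2 : ℕ) : ℤ) ∣ y ^ 2 + y + 1 := by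
    rw [← ZMod.intCast_zmod_eq_zero_iff_dvd]; push_cast
    generalize (y : ZMod 2) = z; revert z; decide
  obtain ⟨p, hp, hpN, hp3⟩ := Int.exists_prime_ne_dvd_of_not_sq_dvd Nat.prime_three
    (by push_cast; nlinarith) h9
  exact ⟨p, hp, by rintro rfl; exact h2 hpN, hp3, hpN⟩

theorem exists_prime_dvd_sq_sub_add_one {y : ℤ} (hy : 3 ≤ y) :
    ∃ p : ℕ, p.Prime ∧ p ≠ 2 ∧ p ≠ 3 ∧ (p : ℤ) ∣ y ^ 2 - y + 1 := by
  have h9 : ¬ ((3 : ℕ) : ℤ) ^ 2 ∣ y ^ 2 - y + 1 := by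
    rw [← Nat.cast_pow, ← ZMod.intCast_zmod_eq_zero_iff_dvd]; push_cast
    generalize (y : ZMod 9) = z; revert z; decide
  have h2 : ¬ ((2 : ℕ) : ℤ) ∣ y ^ 2 - y + 1 := by
    rw [← ZMod.intCast_zmod_eq_zero_iff_dvd]; push_cast
    generalize (y : ZMod 2) = z; revert z; decide
  obtain ⟨p, hp, hpN, hp3⟩ := Int.exists_prime_ne_dvd_of_not_sq_dvd Nat.prime_three
    (by push_cast; nlinarith) h9
  exact ⟨p, hp, by rintro rfl; exact h2 hpN, hp3, hpN⟩

def HasPrimitivePrimeDivisor (m d : ℕ) : Prop :=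
  ∃ p : ℕ, p.Prime ∧ orderOf (m : ZMod p) = d

theorem exists_prime_dvd_eval_cyclotomic_two_pow_mul_three_pow {m : ℤ} (a b : ℕ) (hm : 2 ≤ m)
    (hd : 3 ≤ 2 ^ a * 3 ^ b) (hexc : m = 2 → 2 ^ a * 3 ^ b ≠ 6) :
    ∃ p : ℕ, p.Prime ∧ p ≠ 2 ∧ p ≠ 3 ∧ (p : ℤ) ∣ (cyclotomic (2 ^ a * 3 ^ b) ℤ).eval m := by
  have two_le_pow (e : ℕ) (he : e ≠ 0) : 2 ≤ m ^ e := hm.trans (le_self_pow₀ (by omega) he)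
  rcases Nat.eq_zero_or_pos b with rfl | hb
  · obtain ⟨a, rfl⟩ : ∃ c, a = c + 2 := ⟨a - 2, by
      have : 2 ≤ a := by
        by_contra! h
        interval_cases a <;> simp at hd
      omega⟩
    rw [show 2 ^ (a + 2) * 3 ^ 0 = 2 * 2 ^ (a + 1) by ring,
      cyclotomic_mul_eq_expand _ (by positivity) fun q hq h => hq.dvd_of_dvd_pow h,
      expand_eval, cyclotomic_two, eval_add, eval_X, eval_one, pow_succ, pow_mul]
    exact exists_prime_dvd_sq_add_one (two_le_pow _ (by positivity))
  obtain ⟨b, rfl⟩ : ∃ c, b = c + 1 := ⟨b - 1, by omega⟩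
  rcases Nat.eq_zero_or_pos a with rfl | ha
  · rw [show 2 ^ 0 * 3 ^ (b + 1) = 3 * 3 ^ b by ring,
      cyclotomic_mul_eq_expand _ (by positivity) fun q hq h => hq.dvd_of_dvd_pow h,
      expand_eval, cyclotomic_three]
    simpa using exists_prime_dvd_sq_add_add_one (two_le_pow _ (by positivity))
  obtain ⟨a, rfl⟩ : ∃ c, a = c + 1 := ⟨a - 1, by omega⟩
  have h0 : 2 ^ a * 3 ^ b ≠ 0 := by positivity
  have hy : 3 ≤ m ^ (2 ^ a * 3 ^ b) := by
    rcases (show m = 2 ∨ 3 ≤ m by omega) with rfl | hm3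
    · have h1 : 2 ^ a * 3 ^ b ≠ 1 := fun h => hexc rfl (by simp_all)
      calc (3 : ℤ) ≤ 2 ^ 2 := by norm_num
        _ ≤ 2 ^ (2 ^ a * 3 ^ b) := pow_le_pow_right₀ (by norm_num) (by omega)
    · exact hm3.trans (le_self_pow₀ (by omega) h0)
  rw [show 2 ^ (a + 1) * 3 ^ (b + 1) = 6 * (2 ^ a * 3 ^ b) by ring,
    cyclotomic_mul_eq_expand _ h0 fun q hq h => ?_, expand_eval, cyclotomic_six]
  · simpa using exists_prime_dvd_sq_sub_add_one hy
  · rcases hq.dvd_mul.mp h with h | h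
    · exact (hq.dvd_of_dvd_pow h).trans (by norm_num)
    · exact (hq.dvd_of_dvd_pow h).trans (by norm_num)

theorem hasPrimitivePrimeDivisor_two_pow_mul_three_pow {m : ℕ} (a b : ℕ) (hm : 2 ≤ m)
    (hd : 3 ≤ 2 ^ a * 3 ^ b) (hexc : m = 2 → 2 ^ a * 3 ^ b ≠ 6) :
    HasPrimitivePrimeDivisor m (2 ^ a * 3 ^ b) := by
  obtain ⟨p, hp, hp2, hp3, hdvd⟩ := exists_prime_dvd_eval_cyclotomic_two_pow_mul_three_pow a b
    (m := m) (by exact_mod_cast hm) hd (fun h => hexc (by exact_mod_cast h))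
  have := Fact.mk hp
  have hpd : ¬ p ∣ 2 ^ a * 3 ^ b := fun h => by
    rcases hp.dvd_mul.mp h with h | h
    · exact hp2 ((Nat.prime_dvd_prime_iff_eq hp Nat.prime_two).mp (hp.dvd_of_dvd_pow h))
    · exact hp3 ((Nat.prime_dvd_prime_iff_eq hp Nat.prime_three).mp (hp.dvd_of_dvd_pow h))
  exact ⟨p, hp, by simpa using orderOf_eq_of_dvd_eval_cyclotomic hdvd hpd⟩

def IsCovering (C : Finset (ℕ × ℕ)) : Prop :=
  ∀ n : ℕ, ∃ c ∈ C, n ≡ c.2 [MOD c.1]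

theorem isCovering_of_forall_lt {C : Finset (ℕ × ℕ)} {L : ℕ} (hL : 0 < L)
    (hdvd : ∀ c ∈ C, c.1 ∣ L) (h : ∀ n < L, ∃ c ∈ C, n ≡ c.2 [MOD c.1]) : IsCovering C := by
  intro n
  obtain ⟨c, hc, hnc⟩ := h (n % L) (Nat.mod_lt n hL)
  exact ⟨c, hc, ((Nat.mod_modEq n L).symm.of_dvd (hdvd c hc)).trans hnc⟩

theorem dvd_mul_pow_add_one_of_modEq {p d k m n a : ℕ} (hord : orderOf (m : ZMod p) = d)
    (hn : n ≡ a [MOD d]) (hk : (k : ZMod p) * m ^ a = -1) : p ∣ k * m ^ n + 1 := by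
  rw [← ZMod.natCast_eq_zero_iff]
  push_cast
  rw [← pow_mod_orderOf, hord, hn, ← hord, pow_mod_orderOf, hk, neg_add_cancel]

theorem sub_one_mul_pow_ne_zero_of_one_lt_orderOf {R : Type*} [Ring R] [IsDomain R] {x : R}
    (hx : 1 < orderOf x) (a : ℕ) : (x - 1) * x ^ a ≠ 0 := by
  have hunit : IsUnit x := (orderOf_pos_iff.mp (by omega)).isUnit
  refine mul_ne_zero (sub_ne_zero.mpr fun h => ?_) (pow_ne_zero a hunit.ne_zero)
  rw [h, orderOf_one] at hx
  exact hx.false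

theorem Nat.coprime_of_orderOf_ne {p q m : ℕ} (hp : p.Prime) (hq : q.Prime)
    (h : orderOf (m : ZMod p) ≠ orderOf (m : ZMod q)) : p.Coprime q :=
  (Nat.coprime_primes hp hq).mpr fun hpq => h (hpq ▸ rfl)

theorem exists_sub_one_mul_mul_pow_eq_neg_one {m : ℕ} {C : Finset (ℕ × ℕ)} {p : ℕ × ℕ → ℕ}
    (hp : ∀ c ∈ C, (p c).Prime) (hcop : Set.Pairwise (C : Set (ℕ × ℕ)) (Nat.Coprime on p))
    (hne : ∀ c ∈ C, ((m : ZMod (p c)) - 1) * m ^ c.2 ≠ 0) :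
    ∃ j : ℕ, ∀ c ∈ C, ((m : ZMod (p c)) - 1) * j * m ^ c.2 = -1 := by
  let r : ℕ × ℕ → ℕ := fun c => (-(((m : ZMod (p c)) - 1) * (m : ZMod (p c)) ^ c.2)⁻¹).val
  obtain ⟨j, hj⟩ := Nat.chineseRemainderOfFinset r p C (fun c hc => (hp c hc).ne_zero) hcop
  refine ⟨j, fun c hc => ?_⟩
  have := Fact.mk (hp c hc)
  rw [(ZMod.natCast_eq_natCast_iff _ _ _).mpr (hj c hc), ZMod.natCast_zmod_val,
    mul_right_comm, mul_neg, mul_inv_cancel₀ (hne c hc)]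

theorem infinite_setOf_not_prime_mul_pow_add_one_of_isCovering {m : ℕ} (hm : 1 < m)
    {C : Finset (ℕ × ℕ)} (hcover : IsCovering C) (hinj : Set.InjOn Prod.fst (C : Set (ℕ × ℕ)))
    (hC : ∀ c ∈ C, 1 < c.1 ∧ HasPrimitivePrimeDivisor m c.1) :
    {k : ℕ | 0 < k ∧ m - 1 ∣ k ∧ ∀ n, ¬ (k * m ^ n + 1).Prime}.Infinite := by
  choose! p hp hord using fun c hc => (hC c hc).2
  have hcop : Set.Pairwise (C : Set (ℕ × ℕ)) (Nat.Coprime on p) := fun c hc c' hc' hne =>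
    Nat.coprime_of_orderOf_ne (hp c hc) (hp c' hc') fun h =>
      hne (hinj hc hc' ((hord c hc).symm.trans (h.trans (hord c' hc'))))
  obtain ⟨j, hj⟩ := exists_sub_one_mul_mul_pow_eq_neg_one hp hcop fun c hc =>
    have := Fact.mk (hp c hc)
    sub_one_mul_pow_ne_zero_of_one_lt_orderOf ((hord c hc).symm ▸ (hC c hc).1) c.2
  set P := ∏ c ∈ C, p c
  have hP : 0 < P := Finset.prod_pos fun c hc => (hp c hc).pos
  let k : ℕ → ℕ := fun i => (m - 1) * (j + (i + 1) * P)
  have hk : StrictMono k := fun i i' h => by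
    have : (i + 1) * P < (i' + 1) * P := Nat.mul_lt_mul_of_pos_right (by omega) hP
    exact Nat.mul_lt_mul_of_pos_left (by omega) (by omega)
  refine Set.infinite_of_injective_forall_mem hk.injective fun i =>
    ⟨Nat.mul_pos (by omega) (by positivity), dvd_mul_right _ _, fun n => ?_⟩
  obtain ⟨c, hc, hnc⟩ := hcover n
  have hpP : p c ∣ P := Finset.dvd_prod_of_mem p hc
  have hpk : p c ≤ k i := calc
    p c ≤ P := Nat.le_of_dvd hP hpP
    _ ≤ (i + 1) * P := Nat.le_mul_of_pos_left P i.succ_pos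
    _ ≤ j + (i + 1) * P := Nat.le_add_left _ _
    _ ≤ k i := Nat.le_mul_of_pos_left _ (by omega)
  refine Nat.not_prime_of_dvd_of_lt (dvd_mul_pow_add_one_of_modEq (hord c hc) hnc ?_)
    (hp c hc).two_le (Nat.lt_succ_of_le (hpk.trans (Nat.le_mul_of_pos_right _ (by positivity))))
  have hP0 : (P : ZMod (p c)) = 0 := (ZMod.natCast_eq_zero_iff _ _).mpr hpP
  simpa [k, Nat.cast_sub hm.le, hP0] using hj c hc

-- `2 ^ 6 - 1 = 3 ^ 2 * 7` has no primitive prime divisor, so base `2` needs a covering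
-- without the modulus `6`.
def covering24 : Finset (ℕ × ℕ) := {(2, 0), (3, 0), (4, 1), (8, 3), (12, 7), (24, 23)}

def covering144 : Finset (ℕ × ℕ) :=
  {(3, 2), (4, 3), (6, 4), (8, 5), (9, 6), (12, 6), (16, 9), (18, 12), (24, 1), (36, 0), (48, 33)}

theorem isCovering_covering24 : IsCovering covering24 :=
  isCovering_of_forall_lt (L := 24) (by norm_num) (by decide) (by decide +kernel)

theorem isCovering_covering144 : IsCovering covering144 :=
  isCovering_of_forall_lt (L := 144) (by norm_num) (by decide) (by decide +kernel)

theorem exists_isCovering_hasPrimitivePrimeDivisor {m : ℕ} (hm : 2 ≤ m) :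
    ∃ C : Finset (ℕ × ℕ), IsCovering C ∧ Set.InjOn Prod.fst (C : Set (ℕ × ℕ)) ∧
      ∀ c ∈ C, 1 < c.1 ∧ HasPrimitivePrimeDivisor m c.1 := by
  have hppd (a b : ℕ) (hd : 3 ≤ 2 ^ a * 3 ^ b) (hexc : m = 2 → 2 ^ a * 3 ^ b ≠ 6) :
      1 < 2 ^ a * 3 ^ b ∧ HasPrimitivePrimeDivisor m (2 ^ a * 3 ^ b) :=
    ⟨by omega, hasPrimitivePrimeDivisor_two_pow_mul_three_pow a b hm hd hexc⟩
  rcases hm.eq_or_lt with rfl | hm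
  · refine ⟨covering24, isCovering_covering24, by simp [Set.InjOn, covering24], ?_⟩
    simp only [covering24, Finset.mem_insert, Finset.mem_singleton, forall_eq_or_imp, forall_eq]
    exact ⟨⟨one_lt_two, 3, Nat.prime_three, orderOf_eq_prime (by decide) (by decide)⟩,
      hppd 0 1 (by norm_num) (by norm_num), hppd 2 0 (by norm_num) (by norm_num),
      hppd 3 0 (by norm_num) (by norm_num), hppd 2 1 (by norm_num) (by norm_num),
      hppd 3 1 (by norm_num) (by norm_num)⟩
  · refine ⟨covering144, isCovering_covering144, by simp [Set.InjOn, covering144], ?_⟩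
    simp only [covering144, Finset.mem_insert, Finset.mem_singleton, forall_eq_or_imp, forall_eq]
    have hppd' (a b : ℕ) (hd : 3 ≤ 2 ^ a * 3 ^ b) := hppd a b hd fun h => absurd h (by omega)
    exact ⟨hppd' 0 1 (by norm_num), hppd' 2 0 (by norm_num), hppd' 1 1 (by norm_num),
      hppd' 3 0 (by norm_num), hppd' 0 2 (by norm_num), hppd' 2 1 (by norm_num),
      hppd' 4 0 (by norm_num), hppd' 1 2 (by norm_num), hppd' 3 1 (by norm_num),
      hppd' 2 2 (by norm_num), hppd' 4 1 (by norm_num)⟩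

theorem stmt_14 (m : ℤ) (hm : 1 < m) :
    {k : ℕ | 0 < k ∧
      (∀ q : ℕ, q.Prime → (q : ℤ) ∣ m - 1 → ¬ ((k : ℤ) ≡ -1 [ZMOD q])) ∧
      ∀ n : ℕ, 1 ≤ n →
        1 < (k : ℤ) * m ^ n + 1 ∧ ¬ Prime ((k : ℤ) * m ^ n + 1)}.Infinite := by
  lift m to ℕ using by omega
  obtain ⟨C, hcover, hinj, hC⟩ := exists_isCovering_hasPrimitivePrimeDivisor (m := m) (by omega)
  refine (infinite_setOf_not_prime_mul_pow_add_one_of_isCovering (by omega) hcover hinj hC).mono ?_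
  rintro k ⟨hk, hmk, hprime⟩
  refine ⟨hk, fun q hq hqm hkq => ?_, fun n _ => ⟨?_, ?_⟩⟩
  · have hmk : ((m : ℤ) - 1) ∣ k := by
      rw [← Nat.cast_one, ← Nat.cast_sub (by omega)]
      exact Int.natCast_dvd_natCast.mpr hmk
    have hq1 : (q : ℤ) ∣ 1 := by simpa using dvd_add hkq.dvd (hqm.trans hmk)
    exact hq.not_dvd_one (Int.natCast_dvd_natCast.mp hq1)
  · have : 0 < (k : ℤ) * (m : ℤ) ^ n := mul_pos (by exact_mod_cast hk) (pow_pos (by omega) n)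
    omega
  · have := hprime n
    rwa [Nat.prime_iff_prime_int, Nat.cast_add, Nat.cast_mul, Nat.cast_pow, Nat.cast_one] at this
end

section
/- For any integer m > 1, there exist infinitely many positive integers k such that k·(m-1)·m^n - 1 is composite for every positive integer n. -/
section Helpers

private lemma crt2 {n₁ n₂ : ℤ} (h : IsCoprime n₁ n₂) (a₁ a₂ : ℤ) :
    ∃ x : ℤ, n₁ ∣ x - a₁ ∧ n₂ ∣ x - a₂ := by
  obtain ⟨u, v, huv⟩ := h
  exact ⟨a₁ * v * n₂ + a₂ * u * n₁, ⟨u * (a₂ - a₁), by linear_combination a₁ * huv⟩,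
    ⟨v * (a₁ - a₂), by linear_combination a₂ * huv⟩⟩

private lemma coprime_of_bezout {x y u v c : ℤ} (h : u * x + v * y = c) (hxc : IsCoprime x c) :
    IsCoprime x y := by
  obtain ⟨α, β, hab⟩ := hxc
  exact ⟨α + β * u, β * v, by linear_combination hab + β * h⟩

private lemma carry {d P x y r : ℤ} (h1 : d ∣ P) (h2 : P ∣ x - y) (h3 : d ∣ y - r) :
    d ∣ x - r := by
  have h := dvd_add (h1.trans h2) h3
  rwa [sub_add_sub_cancel] at h

private lemma strip2 (Φ : ℤ) (hgt : 2 < Φ) (h4 : ¬ (4:ℤ) ∣ Φ) (h3 : ¬ (3:ℤ) ∣ Φ) :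
    ∃ Ψ : ℤ, 1 < Ψ ∧ Ψ ∣ Φ ∧ IsCoprime Ψ 2 ∧ IsCoprime Ψ 3 := by
  by_cases h2 : (2:ℤ) ∣ Φ
  · obtain ⟨w, hw⟩ := h2
    refine ⟨w, by omega, ⟨2, by omega⟩, ?_, ?_⟩
    · refine (Int.prime_two.coprime_iff_not_dvd.2 ?_).symm
      rintro ⟨t, ht⟩
      exact h4 ⟨t, by omega⟩
    · refine (Int.prime_three.coprime_iff_not_dvd.2 ?_).symm
      rintro ⟨t, ht⟩
      exact h3 ⟨2 * t, by omega⟩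
  · exact ⟨Φ, by omega, dvd_rfl, (Int.prime_two.coprime_iff_not_dvd.2 h2).symm,
      (Int.prime_three.coprime_iff_not_dvd.2 h3).symm⟩

private lemma strip6 (Φ : ℤ) (hgt : 6 < Φ) (h4 : ¬ (4:ℤ) ∣ Φ) (h9 : ¬ (9:ℤ) ∣ Φ) :
    ∃ Ψ : ℤ, 1 < Ψ ∧ Ψ ∣ Φ ∧ IsCoprime Ψ 2 ∧ IsCoprime Ψ 3 := by
  by_cases h3 : (3:ℤ) ∣ Φ
  · obtain ⟨w, hw⟩ := h3
    have h4w : ¬ (4:ℤ) ∣ w := by rintro ⟨t, ht⟩; exact h4 ⟨3 * t, by omega⟩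
    have h3w : ¬ (3:ℤ) ∣ w := by rintro ⟨t, ht⟩; exact h9 ⟨t, by omega⟩
    obtain ⟨Ψ, h1, hdvd, hc2, hc3⟩ := strip2 w (by omega) h4w h3w
    exact ⟨Ψ, h1, hdvd.trans ⟨3, by omega⟩, hc2, hc3⟩
  · exact strip2 Φ (by omega) h4 h3

private lemma cover_dvd {Ψ a m : ℤ} {e s n : ℕ} (hΨ : Ψ ∣ m ^ e - 1)
    (ha : Ψ ∣ a - m ^ s) (hn : (n + s) % e = 0) : Ψ ∣ a * m ^ n - 1 := by
  obtain ⟨t, ht⟩ : e ∣ n + s := Nat.dvd_of_mod_eq_zero hn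
  have h1 : Ψ ∣ m ^ (n + s) - 1 := by
    have h2 := sub_dvd_pow_sub_pow (m ^ e) 1 t
    simp only [one_pow, ← pow_mul] at h2
    rw [ht]
    exact hΨ.trans h2
  have key := dvd_add (ha.mul_right (m ^ n)) h1
  rwa [show (a - m ^ s) * m ^ n + (m ^ (n + s) - 1) = a * m ^ n - 1 by
    rw [pow_add]; ring] at key

private lemma not_prime_of_divisor {v d : ℤ} (h1 : 1 < d) (h2 : d < v) (hdvd : d ∣ v) :
    ¬ Prime v := by
  intro hp
  obtain ⟨c, hc⟩ := hdvd
  rcases hp.irreducible.isUnit_or_isUnit hc with h | h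
  · rcases Int.isUnit_iff.1 h with h' | h' <;> omega
  · rcases Int.isUnit_iff.1 h with h' | h' <;> subst h' <;> omega

private lemma coverage17 (n : ℕ) : n % 3 = 0 ∨ n % 4 = 0 ∨ n % 6 = 1 ∨ n % 8 = 2 ∨
    n % 9 = 2 ∨ n % 12 = 5 ∨ n % 16 = 6 ∨ n % 18 = 5 ∨ n % 24 = 22 ∨ n % 36 = 35 ∨
    n % 48 = 14 := by
  obtain ⟨r, hr⟩ : ∃ r, r = n % 144 := ⟨_, rfl⟩
  have hlt : r < 144 := by omega
  interval_cases r <;> omega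

end Helpers
private lemma nd4_3 (m : ℤ) : ¬ (4:ℤ) ∣ ((1:ℤ) + m + m ^ 2) := by
  intro h
  have h0 : ((((1:ℤ) + m + m ^ 2) : ℤ) : ZMod 4) = 0 := by
    exact_mod_cast (ZMod.intCast_zmod_eq_zero_iff_dvd _ 4).2 h
  push_cast at h0
  revert h0
  generalize (m : ZMod 4) = x
  revert x
  decide
private lemma nd9_3 (m : ℤ) : ¬ (9:ℤ) ∣ ((1:ℤ) + m + m ^ 2) := by
  intro h
  have h0 : ((((1:ℤ) + m + m ^ 2) : ℤ) : ZMod 9) = 0 := by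
    exact_mod_cast (ZMod.intCast_zmod_eq_zero_iff_dvd _ 9).2 h
  push_cast at h0
  revert h0
  generalize (m : ZMod 9) = x
  revert x
  decide
private lemma nd4_4 (m : ℤ) : ¬ (4:ℤ) ∣ ((1:ℤ) + m ^ 2) := by
  intro h
  have h0 : ((((1:ℤ) + m ^ 2) : ℤ) : ZMod 4) = 0 := by
    exact_mod_cast (ZMod.intCast_zmod_eq_zero_iff_dvd _ 4).2 h
  push_cast at h0
  revert h0
  generalize (m : ZMod 4) = x
  revert x
  decide
private lemma nd3_4 (m : ℤ) : ¬ (3:ℤ) ∣ ((1:ℤ) + m ^ 2) := by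
  intro h
  have h0 : ((((1:ℤ) + m ^ 2) : ℤ) : ZMod 3) = 0 := by
    exact_mod_cast (ZMod.intCast_zmod_eq_zero_iff_dvd _ 3).2 h
  push_cast at h0
  revert h0
  generalize (m : ZMod 3) = x
  revert x
  decide
private lemma nd4_6 (m : ℤ) : ¬ (4:ℤ) ∣ ((1:ℤ) + (-1) * m + m ^ 2) := by
  intro h
  have h0 : ((((1:ℤ) + (-1) * m + m ^ 2) : ℤ) : ZMod 4) = 0 := by
    exact_mod_cast (ZMod.intCast_zmod_eq_zero_iff_dvd _ 4).2 h
  push_cast at h0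
  revert h0
  generalize (m : ZMod 4) = x
  revert x
  decide
private lemma nd9_6 (m : ℤ) : ¬ (9:ℤ) ∣ ((1:ℤ) + (-1) * m + m ^ 2) := by
  intro h
  have h0 : ((((1:ℤ) + (-1) * m + m ^ 2) : ℤ) : ZMod 9) = 0 := by
    exact_mod_cast (ZMod.intCast_zmod_eq_zero_iff_dvd _ 9).2 h
  push_cast at h0
  revert h0
  generalize (m : ZMod 9) = x
  revert x
  decide
private lemma nd4_8 (m : ℤ) : ¬ (4:ℤ) ∣ ((1:ℤ) + m ^ 4) := by
  intro h
  have h0 : ((((1:ℤ) + m ^ 4) : ℤ) : ZMod 4) = 0 := by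
    exact_mod_cast (ZMod.intCast_zmod_eq_zero_iff_dvd _ 4).2 h
  push_cast at h0
  revert h0
  generalize (m : ZMod 4) = x
  revert x
  decide
private lemma nd3_8 (m : ℤ) : ¬ (3:ℤ) ∣ ((1:ℤ) + m ^ 4) := by
  intro h
  have h0 : ((((1:ℤ) + m ^ 4) : ℤ) : ZMod 3) = 0 := by
    exact_mod_cast (ZMod.intCast_zmod_eq_zero_iff_dvd _ 3).2 h
  push_cast at h0
  revert h0
  generalize (m : ZMod 3) = x
  revert x
  decide
private lemma nd4_9 (m : ℤ) : ¬ (4:ℤ) ∣ ((1:ℤ) + m ^ 3 + m ^ 6) := by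
  intro h
  have h0 : ((((1:ℤ) + m ^ 3 + m ^ 6) : ℤ) : ZMod 4) = 0 := by
    exact_mod_cast (ZMod.intCast_zmod_eq_zero_iff_dvd _ 4).2 h
  push_cast at h0
  revert h0
  generalize (m : ZMod 4) = x
  revert x
  decide
private lemma nd9_9 (m : ℤ) : ¬ (9:ℤ) ∣ ((1:ℤ) + m ^ 3 + m ^ 6) := by
  intro h
  have h0 : ((((1:ℤ) + m ^ 3 + m ^ 6) : ℤ) : ZMod 9) = 0 := by
    exact_mod_cast (ZMod.intCast_zmod_eq_zero_iff_dvd _ 9).2 h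
  push_cast at h0
  revert h0
  generalize (m : ZMod 9) = x
  revert x
  decide
private lemma nd4_12 (m : ℤ) : ¬ (4:ℤ) ∣ ((1:ℤ) + (-1) * m ^ 2 + m ^ 4) := by
  intro h
  have h0 : ((((1:ℤ) + (-1) * m ^ 2 + m ^ 4) : ℤ) : ZMod 4) = 0 := by
    exact_mod_cast (ZMod.intCast_zmod_eq_zero_iff_dvd _ 4).2 h
  push_cast at h0
  revert h0
  generalize (m : ZMod 4) = x
  revert x
  decide
private lemma nd3_12 (m : ℤ) : ¬ (3:ℤ) ∣ ((1:ℤ) + (-1) * m ^ 2 + m ^ 4) := by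
  intro h
  have h0 : ((((1:ℤ) + (-1) * m ^ 2 + m ^ 4) : ℤ) : ZMod 3) = 0 := by
    exact_mod_cast (ZMod.intCast_zmod_eq_zero_iff_dvd _ 3).2 h
  push_cast at h0
  revert h0
  generalize (m : ZMod 3) = x
  revert x
  decide
private lemma nd4_16 (m : ℤ) : ¬ (4:ℤ) ∣ ((1:ℤ) + m ^ 8) := by
  intro h
  have h0 : ((((1:ℤ) + m ^ 8) : ℤ) : ZMod 4) = 0 := by
    exact_mod_cast (ZMod.intCast_zmod_eq_zero_iff_dvd _ 4).2 h
  push_cast at h0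
  revert h0
  generalize (m : ZMod 4) = x
  revert x
  decide
private lemma nd3_16 (m : ℤ) : ¬ (3:ℤ) ∣ ((1:ℤ) + m ^ 8) := by
  intro h
  have h0 : ((((1:ℤ) + m ^ 8) : ℤ) : ZMod 3) = 0 := by
    exact_mod_cast (ZMod.intCast_zmod_eq_zero_iff_dvd _ 3).2 h
  push_cast at h0
  revert h0
  generalize (m : ZMod 3) = x
  revert x
  decide
private lemma nd4_18 (m : ℤ) : ¬ (4:ℤ) ∣ ((1:ℤ) + (-1) * m ^ 3 + m ^ 6) := by
  intro h
  have h0 : ((((1:ℤ) + (-1) * m ^ 3 + m ^ 6) : ℤ) : ZMod 4) = 0 := by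
    exact_mod_cast (ZMod.intCast_zmod_eq_zero_iff_dvd _ 4).2 h
  push_cast at h0
  revert h0
  generalize (m : ZMod 4) = x
  revert x
  decide
private lemma nd9_18 (m : ℤ) : ¬ (9:ℤ) ∣ ((1:ℤ) + (-1) * m ^ 3 + m ^ 6) := by
  intro h
  have h0 : ((((1:ℤ) + (-1) * m ^ 3 + m ^ 6) : ℤ) : ZMod 9) = 0 := by
    exact_mod_cast (ZMod.intCast_zmod_eq_zero_iff_dvd _ 9).2 h
  push_cast at h0
  revert h0
  generalize (m : ZMod 9) = x
  revert x
  decide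
private lemma nd4_24 (m : ℤ) : ¬ (4:ℤ) ∣ ((1:ℤ) + (-1) * m ^ 4 + m ^ 8) := by
  intro h
  have h0 : ((((1:ℤ) + (-1) * m ^ 4 + m ^ 8) : ℤ) : ZMod 4) = 0 := by
    exact_mod_cast (ZMod.intCast_zmod_eq_zero_iff_dvd _ 4).2 h
  push_cast at h0
  revert h0
  generalize (m : ZMod 4) = x
  revert x
  decide
private lemma nd3_24 (m : ℤ) : ¬ (3:ℤ) ∣ ((1:ℤ) + (-1) * m ^ 4 + m ^ 8) := by
  intro h
  have h0 : ((((1:ℤ) + (-1) * m ^ 4 + m ^ 8) : ℤ) : ZMod 3) = 0 := by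
    exact_mod_cast (ZMod.intCast_zmod_eq_zero_iff_dvd _ 3).2 h
  push_cast at h0
  revert h0
  generalize (m : ZMod 3) = x
  revert x
  decide
private lemma nd4_36 (m : ℤ) : ¬ (4:ℤ) ∣ ((1:ℤ) + (-1) * m ^ 6 + m ^ 12) := by
  intro h
  have h0 : ((((1:ℤ) + (-1) * m ^ 6 + m ^ 12) : ℤ) : ZMod 4) = 0 := by
    exact_mod_cast (ZMod.intCast_zmod_eq_zero_iff_dvd _ 4).2 h
  push_cast at h0
  revert h0
  generalize (m : ZMod 4) = x
  revert x
  decide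
private lemma nd3_36 (m : ℤ) : ¬ (3:ℤ) ∣ ((1:ℤ) + (-1) * m ^ 6 + m ^ 12) := by
  intro h
  have h0 : ((((1:ℤ) + (-1) * m ^ 6 + m ^ 12) : ℤ) : ZMod 3) = 0 := by
    exact_mod_cast (ZMod.intCast_zmod_eq_zero_iff_dvd _ 3).2 h
  push_cast at h0
  revert h0
  generalize (m : ZMod 3) = x
  revert x
  decide
private lemma nd4_48 (m : ℤ) : ¬ (4:ℤ) ∣ ((1:ℤ) + (-1) * m ^ 8 + m ^ 16) := by
  intro h
  have h0 : ((((1:ℤ) + (-1) * m ^ 8 + m ^ 16) : ℤ) : ZMod 4) = 0 := by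
    exact_mod_cast (ZMod.intCast_zmod_eq_zero_iff_dvd _ 4).2 h
  push_cast at h0
  revert h0
  generalize (m : ZMod 4) = x
  revert x
  decide
private lemma nd3_48 (m : ℤ) : ¬ (3:ℤ) ∣ ((1:ℤ) + (-1) * m ^ 8 + m ^ 16) := by
  intro h
  have h0 : ((((1:ℤ) + (-1) * m ^ 8 + m ^ 16) : ℤ) : ZMod 3) = 0 := by
    exact_mod_cast (ZMod.intCast_zmod_eq_zero_iff_dvd _ 3).2 h
  push_cast at h0
  revert h0
  generalize (m : ZMod 3) = x
  revert x
  decide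
private lemma bz_3_4 (m : ℤ) : ((-1) * m) * ((1:ℤ) + m + m ^ 2) + ((1:ℤ) + m) * ((1:ℤ) + m ^ 2) = 1 := by ring
private lemma bz_3_6 (m : ℤ) : ((1:ℤ) + (-1) * m) * ((1:ℤ) + m + m ^ 2) + ((1:ℤ) + m) * ((1:ℤ) + (-1) * m + m ^ 2) = 2 := by ring
private lemma bz_3_8 (m : ℤ) : ((1:ℤ) + (-1) * m ^ 2 + m ^ 3) * ((1:ℤ) + m + m ^ 2) + ((-1) * m) * ((1:ℤ) + m ^ 4) = 1 := by ring
private lemma bz_3_9 (m : ℤ) : ((2:ℤ) + -2 * m + m ^ 3 + (-1) * m ^ 4) * ((1:ℤ) + m + m ^ 2) + ((1:ℤ)) * ((1:ℤ) + m ^ 3 + m ^ 6) = 3 := by ring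
private lemma bz_3_12 (m : ℤ) : ((2:ℤ) + (-1) * m + (-1) * m ^ 2 + m ^ 3) * ((1:ℤ) + m + m ^ 2) + ((-1) * m) * ((1:ℤ) + (-1) * m ^ 2 + m ^ 4) = 2 := by ring
private lemma bz_3_16 (m : ℤ) : ((-1) * m + m ^ 2 + (-1) * m ^ 4 + m ^ 5 + (-1) * m ^ 7) * ((1:ℤ) + m + m ^ 2) + ((1:ℤ) + m) * ((1:ℤ) + m ^ 8) = 1 := by ring
private lemma bz_3_18 (m : ℤ) : (m ^ 3 + (-1) * m ^ 4) * ((1:ℤ) + m + m ^ 2) + ((1:ℤ)) * ((1:ℤ) + (-1) * m ^ 3 + m ^ 6) = 1 := by ring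
private lemma bz_3_24 (m : ℤ) : ((1:ℤ) + -2 * m + m ^ 2 + m ^ 3 + (-1) * m ^ 4 + m ^ 5 + (-1) * m ^ 7) * ((1:ℤ) + m + m ^ 2) + ((1:ℤ) + m) * ((1:ℤ) + (-1) * m ^ 4 + m ^ 8) = 2 := by ring
private lemma bz_3_36 (m : ℤ) : (m ^ 6 + (-1) * m ^ 7 + m ^ 9 + (-1) * m ^ 10) * ((1:ℤ) + m + m ^ 2) + ((1:ℤ)) * ((1:ℤ) + (-1) * m ^ 6 + m ^ 12) = 1 := by ring
private lemma bz_3_48 (m : ℤ) : ((2:ℤ) + (-1) * m + (-1) * m ^ 2 + 2 * m ^ 3 + (-1) * m ^ 4 + (-1) * m ^ 5 + 2 * m ^ 6 + (-1) * m ^ 7 + (-1) * m ^ 8 + m ^ 9 + (-1) * m ^ 11 + m ^ 12 + (-1) * m ^ 14 + m ^ 15) * ((1:ℤ) + m + m ^ 2) + ((-1) * m) * ((1:ℤ) + (-1) * m ^ 8 + m ^ 16) = 2 := by ring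
private lemma bz_4_6 (m : ℤ) : ((1:ℤ) + (-1) * m) * ((1:ℤ) + m ^ 2) + (m) * ((1:ℤ) + (-1) * m + m ^ 2) = 1 := by ring
private lemma bz_4_8 (m : ℤ) : ((1:ℤ) + (-1) * m ^ 2) * ((1:ℤ) + m ^ 2) + ((1:ℤ)) * ((1:ℤ) + m ^ 4) = 2 := by ring
private lemma bz_4_9 (m : ℤ) : ((1:ℤ) + (-1) * m + (-1) * m ^ 2 + m ^ 3 + (-1) * m ^ 5) * ((1:ℤ) + m ^ 2) + (m) * ((1:ℤ) + m ^ 3 + m ^ 6) = 1 := by ring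
private lemma bz_4_12 (m : ℤ) : ((2:ℤ) + (-1) * m ^ 2) * ((1:ℤ) + m ^ 2) + ((1:ℤ)) * ((1:ℤ) + (-1) * m ^ 2 + m ^ 4) = 3 := by ring
private lemma bz_4_16 (m : ℤ) : ((1:ℤ) + (-1) * m ^ 2 + m ^ 4 + (-1) * m ^ 6) * ((1:ℤ) + m ^ 2) + ((1:ℤ)) * ((1:ℤ) + m ^ 8) = 2 := by ring
private lemma bz_4_18 (m : ℤ) : ((1:ℤ) + m + (-1) * m ^ 2 + (-1) * m ^ 3 + m ^ 5) * ((1:ℤ) + m ^ 2) + ((-1) * m) * ((1:ℤ) + (-1) * m ^ 3 + m ^ 6) = 1 := by ring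
private lemma bz_4_24 (m : ℤ) : (m ^ 4 + (-1) * m ^ 6) * ((1:ℤ) + m ^ 2) + ((1:ℤ)) * ((1:ℤ) + (-1) * m ^ 4 + m ^ 8) = 1 := by ring
private lemma bz_4_36 (m : ℤ) : ((2:ℤ) + -2 * m ^ 2 + 2 * m ^ 4 + (-1) * m ^ 6 + m ^ 8 + (-1) * m ^ 10) * ((1:ℤ) + m ^ 2) + ((1:ℤ)) * ((1:ℤ) + (-1) * m ^ 6 + m ^ 12) = 3 := by ring
private lemma bz_4_48 (m : ℤ) : (m ^ 8 + (-1) * m ^ 10 + m ^ 12 + (-1) * m ^ 14) * ((1:ℤ) + m ^ 2) + ((1:ℤ)) * ((1:ℤ) + (-1) * m ^ 8 + m ^ 16) = 1 := by ring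
private lemma bz_6_8 (m : ℤ) : ((1:ℤ) + (-1) * m ^ 2 + (-1) * m ^ 3) * ((1:ℤ) + (-1) * m + m ^ 2) + (m) * ((1:ℤ) + m ^ 4) = 1 := by ring
private lemma bz_6_9 (m : ℤ) : ((-1) * m ^ 3 + (-1) * m ^ 4) * ((1:ℤ) + (-1) * m + m ^ 2) + ((1:ℤ)) * ((1:ℤ) + m ^ 3 + m ^ 6) = 1 := by ring
private lemma bz_6_12 (m : ℤ) : ((2:ℤ) + m + (-1) * m ^ 2 + (-1) * m ^ 3) * ((1:ℤ) + (-1) * m + m ^ 2) + (m) * ((1:ℤ) + (-1) * m ^ 2 + m ^ 4) = 2 := by ring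
private lemma bz_6_16 (m : ℤ) : (m + m ^ 2 + (-1) * m ^ 4 + (-1) * m ^ 5 + m ^ 7) * ((1:ℤ) + (-1) * m + m ^ 2) + ((1:ℤ) + (-1) * m) * ((1:ℤ) + m ^ 8) = 1 := by ring
private lemma bz_6_18 (m : ℤ) : ((2:ℤ) + 2 * m + (-1) * m ^ 3 + (-1) * m ^ 4) * ((1:ℤ) + (-1) * m + m ^ 2) + ((1:ℤ)) * ((1:ℤ) + (-1) * m ^ 3 + m ^ 6) = 3 := by ring
private lemma bz_6_24 (m : ℤ) : ((1:ℤ) + 2 * m + m ^ 2 + (-1) * m ^ 3 + (-1) * m ^ 4 + (-1) * m ^ 5 + m ^ 7) * ((1:ℤ) + (-1) * m + m ^ 2) + ((1:ℤ) + (-1) * m) * ((1:ℤ) + (-1) * m ^ 4 + m ^ 8) = 2 := by ring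
private lemma bz_6_36 (m : ℤ) : (m ^ 6 + m ^ 7 + (-1) * m ^ 9 + (-1) * m ^ 10) * ((1:ℤ) + (-1) * m + m ^ 2) + ((1:ℤ)) * ((1:ℤ) + (-1) * m ^ 6 + m ^ 12) = 1 := by ring
private lemma bz_6_48 (m : ℤ) : ((2:ℤ) + m + (-1) * m ^ 2 + -2 * m ^ 3 + (-1) * m ^ 4 + m ^ 5 + 2 * m ^ 6 + m ^ 7 + (-1) * m ^ 8 + (-1) * m ^ 9 + m ^ 11 + m ^ 12 + (-1) * m ^ 14 + (-1) * m ^ 15) * ((1:ℤ) + (-1) * m + m ^ 2) + (m) * ((1:ℤ) + (-1) * m ^ 8 + m ^ 16) = 2 := by ring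
private lemma bz_8_9 (m : ℤ) : ((-1) * m + (-1) * m ^ 2 + (-1) * m ^ 3 + (-1) * m ^ 4) * ((1:ℤ) + m ^ 4) + ((1:ℤ) + m + m ^ 2) * ((1:ℤ) + m ^ 3 + m ^ 6) = 1 := by ring
private lemma bz_8_12 (m : ℤ) : ((1:ℤ) + (-1) * m ^ 2) * ((1:ℤ) + m ^ 4) + (m ^ 2) * ((1:ℤ) + (-1) * m ^ 2 + m ^ 4) = 1 := by ring
private lemma bz_8_16 (m : ℤ) : ((1:ℤ) + (-1) * m ^ 4) * ((1:ℤ) + m ^ 4) + ((1:ℤ)) * ((1:ℤ) + m ^ 8) = 2 := by ring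
private lemma bz_8_18 (m : ℤ) : (m + (-1) * m ^ 2 + m ^ 3 + (-1) * m ^ 4) * ((1:ℤ) + m ^ 4) + ((1:ℤ) + (-1) * m + m ^ 2) * ((1:ℤ) + (-1) * m ^ 3 + m ^ 6) = 1 := by ring
private lemma bz_8_24 (m : ℤ) : ((2:ℤ) + (-1) * m ^ 4) * ((1:ℤ) + m ^ 4) + ((1:ℤ)) * ((1:ℤ) + (-1) * m ^ 4 + m ^ 8) = 3 := by ring
private lemma bz_8_36 (m : ℤ) : ((1:ℤ) + m ^ 2 + (-1) * m ^ 4 + (-1) * m ^ 6 + m ^ 10) * ((1:ℤ) + m ^ 4) + ((-1) * m ^ 2) * ((1:ℤ) + (-1) * m ^ 6 + m ^ 12) = 1 := by ring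
private lemma bz_8_48 (m : ℤ) : (m ^ 8 + (-1) * m ^ 12) * ((1:ℤ) + m ^ 4) + ((1:ℤ)) * ((1:ℤ) + (-1) * m ^ 8 + m ^ 16) = 1 := by ring
private lemma bz_9_12 (m : ℤ) : ((-1) * m ^ 3) * ((1:ℤ) + m ^ 3 + m ^ 6) + ((1:ℤ) + m ^ 2 + m ^ 3 + m ^ 5) * ((1:ℤ) + (-1) * m ^ 2 + m ^ 4) = 1 := by ring
private lemma bz_9_16 (m : ℤ) : ((-1) * m ^ 3 + m ^ 4 + (-1) * m ^ 5 + m ^ 6 + (-1) * m ^ 7) * ((1:ℤ) + m ^ 3 + m ^ 6) + ((1:ℤ) + m ^ 3 + (-1) * m ^ 4 + m ^ 5) * ((1:ℤ) + m ^ 8) = 1 := by ring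
private lemma bz_9_18 (m : ℤ) : ((1:ℤ) + (-1) * m ^ 3) * ((1:ℤ) + m ^ 3 + m ^ 6) + ((1:ℤ) + m ^ 3) * ((1:ℤ) + (-1) * m ^ 3 + m ^ 6) = 2 := by ring
private lemma bz_9_24 (m : ℤ) : ((1:ℤ) + (-1) * m + m ^ 5 + (-1) * m ^ 6) * ((1:ℤ) + m ^ 3 + m ^ 6) + (m + (-1) * m ^ 3 + m ^ 4) * ((1:ℤ) + (-1) * m ^ 4 + m ^ 8) = 1 := by ring
private lemma bz_9_36 (m : ℤ) : ((2:ℤ) + (-1) * m ^ 3 + (-1) * m ^ 6 + m ^ 9) * ((1:ℤ) + m ^ 3 + m ^ 6) + ((-1) * m ^ 3) * ((1:ℤ) + (-1) * m ^ 6 + m ^ 12) = 2 := by ring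
private lemma bz_9_48 (m : ℤ) : ((-1) * m ^ 3 + m ^ 5 + m ^ 6 + (-1) * m ^ 12 + (-1) * m ^ 13 + m ^ 15) * ((1:ℤ) + m ^ 3 + m ^ 6) + ((1:ℤ) + m ^ 3 + (-1) * m ^ 5) * ((1:ℤ) + (-1) * m ^ 8 + m ^ 16) = 1 := by ring
private lemma bz_12_16 (m : ℤ) : ((1:ℤ) + (-1) * m ^ 4 + (-1) * m ^ 6) * ((1:ℤ) + (-1) * m ^ 2 + m ^ 4) + (m ^ 2) * ((1:ℤ) + m ^ 8) = 1 := by ring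
private lemma bz_12_18 (m : ℤ) : ((1:ℤ) + m ^ 2 + (-1) * m ^ 3 + (-1) * m ^ 5) * ((1:ℤ) + (-1) * m ^ 2 + m ^ 4) + (m ^ 3) * ((1:ℤ) + (-1) * m ^ 3 + m ^ 6) = 1 := by ring
private lemma bz_12_24 (m : ℤ) : ((2:ℤ) + m ^ 2 + (-1) * m ^ 4 + (-1) * m ^ 6) * ((1:ℤ) + (-1) * m ^ 2 + m ^ 4) + (m ^ 2) * ((1:ℤ) + (-1) * m ^ 4 + m ^ 8) = 2 := by ring
private lemma bz_12_36 (m : ℤ) : ((2:ℤ) + 2 * m ^ 2 + (-1) * m ^ 6 + (-1) * m ^ 8) * ((1:ℤ) + (-1) * m ^ 2 + m ^ 4) + ((1:ℤ)) * ((1:ℤ) + (-1) * m ^ 6 + m ^ 12) = 3 := by ring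
private lemma bz_12_48 (m : ℤ) : ((1:ℤ) + 2 * m ^ 2 + m ^ 4 + (-1) * m ^ 6 + (-1) * m ^ 8 + (-1) * m ^ 10 + m ^ 14) * ((1:ℤ) + (-1) * m ^ 2 + m ^ 4) + ((1:ℤ) + (-1) * m ^ 2) * ((1:ℤ) + (-1) * m ^ 8 + m ^ 16) = 2 := by ring
private lemma bz_16_18 (m : ℤ) : ((1:ℤ) + (-1) * m ^ 3 + (-1) * m ^ 4 + (-1) * m ^ 5) * ((1:ℤ) + m ^ 8) + (m ^ 3 + m ^ 4 + m ^ 5 + m ^ 6 + m ^ 7) * ((1:ℤ) + (-1) * m ^ 3 + m ^ 6) = 1 := by ring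
private lemma bz_16_24 (m : ℤ) : ((1:ℤ) + (-1) * m ^ 4) * ((1:ℤ) + m ^ 8) + (m ^ 4) * ((1:ℤ) + (-1) * m ^ 4 + m ^ 8) = 1 := by ring
private lemma bz_16_36 (m : ℤ) : (m ^ 2 + (-1) * m ^ 4 + m ^ 6 + (-1) * m ^ 8) * ((1:ℤ) + m ^ 8) + ((1:ℤ) + (-1) * m ^ 2 + m ^ 4) * ((1:ℤ) + (-1) * m ^ 6 + m ^ 12) = 1 := by ring
private lemma bz_16_48 (m : ℤ) : ((2:ℤ) + (-1) * m ^ 8) * ((1:ℤ) + m ^ 8) + ((1:ℤ)) * ((1:ℤ) + (-1) * m ^ 8 + m ^ 16) = 3 := by ring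
private lemma bz_18_24 (m : ℤ) : ((1:ℤ) + m + (-1) * m ^ 5 + (-1) * m ^ 6) * ((1:ℤ) + (-1) * m ^ 3 + m ^ 6) + ((-1) * m + m ^ 3 + m ^ 4) * ((1:ℤ) + (-1) * m ^ 4 + m ^ 8) = 1 := by ring
private lemma bz_18_36 (m : ℤ) : ((2:ℤ) + m ^ 3 + (-1) * m ^ 6 + (-1) * m ^ 9) * ((1:ℤ) + (-1) * m ^ 3 + m ^ 6) + (m ^ 3) * ((1:ℤ) + (-1) * m ^ 6 + m ^ 12) = 2 := by ring
private lemma bz_18_48 (m : ℤ) : (m ^ 3 + (-1) * m ^ 5 + m ^ 6 + (-1) * m ^ 12 + m ^ 13 + (-1) * m ^ 15) * ((1:ℤ) + (-1) * m ^ 3 + m ^ 6) + ((1:ℤ) + (-1) * m ^ 3 + m ^ 5) * ((1:ℤ) + (-1) * m ^ 8 + m ^ 16) = 1 := by ring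
private lemma bz_24_36 (m : ℤ) : ((1:ℤ) + m ^ 4 + (-1) * m ^ 6 + (-1) * m ^ 10) * ((1:ℤ) + (-1) * m ^ 4 + m ^ 8) + (m ^ 6) * ((1:ℤ) + (-1) * m ^ 6 + m ^ 12) = 1 := by ring
private lemma bz_24_48 (m : ℤ) : ((2:ℤ) + m ^ 4 + (-1) * m ^ 8 + (-1) * m ^ 12) * ((1:ℤ) + (-1) * m ^ 4 + m ^ 8) + (m ^ 4) * ((1:ℤ) + (-1) * m ^ 8 + m ^ 16) = 2 := by ring
private lemma bz_36_48 (m : ℤ) : ((1:ℤ) + m ^ 2 + (-1) * m ^ 10 + (-1) * m ^ 12) * ((1:ℤ) + (-1) * m ^ 6 + m ^ 12) + ((-1) * m ^ 2 + m ^ 6 + m ^ 8) * ((1:ℤ) + (-1) * m ^ 8 + m ^ 16) = 1 := by ring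
private lemma bzm_3 (m : ℤ) : (1:ℤ) * ((1:ℤ) + m + m ^ 2) + (-((2:ℤ) + m)) * (m - 1) = 3 := by ring
private lemma bzm_4 (m : ℤ) : (1:ℤ) * ((1:ℤ) + m ^ 2) + (-((1:ℤ) + m)) * (m - 1) = 2 := by ring
private lemma bzm_6 (m : ℤ) : (1:ℤ) * ((1:ℤ) + (-1) * m + m ^ 2) + (-(m)) * (m - 1) = 1 := by ring
private lemma bzm_8 (m : ℤ) : (1:ℤ) * ((1:ℤ) + m ^ 4) + (-((1:ℤ) + m + m ^ 2 + m ^ 3)) * (m - 1) = 2 := by ring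
private lemma bzm_9 (m : ℤ) : (1:ℤ) * ((1:ℤ) + m ^ 3 + m ^ 6) + (-((2:ℤ) + 2 * m + 2 * m ^ 2 + m ^ 3 + m ^ 4 + m ^ 5)) * (m - 1) = 3 := by ring
private lemma bzm_12 (m : ℤ) : (1:ℤ) * ((1:ℤ) + (-1) * m ^ 2 + m ^ 4) + (-(m ^ 2 + m ^ 3)) * (m - 1) = 1 := by ring
private lemma bzm_16 (m : ℤ) : (1:ℤ) * ((1:ℤ) + m ^ 8) + (-((1:ℤ) + m + m ^ 2 + m ^ 3 + m ^ 4 + m ^ 5 + m ^ 6 + m ^ 7)) * (m - 1) = 2 := by ring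
private lemma bzm_18 (m : ℤ) : (1:ℤ) * ((1:ℤ) + (-1) * m ^ 3 + m ^ 6) + (-(m ^ 3 + m ^ 4 + m ^ 5)) * (m - 1) = 1 := by ring
private lemma bzm_24 (m : ℤ) : (1:ℤ) * ((1:ℤ) + (-1) * m ^ 4 + m ^ 8) + (-(m ^ 4 + m ^ 5 + m ^ 6 + m ^ 7)) * (m - 1) = 1 := by ring
private lemma bzm_36 (m : ℤ) : (1:ℤ) * ((1:ℤ) + (-1) * m ^ 6 + m ^ 12) + (-(m ^ 6 + m ^ 7 + m ^ 8 + m ^ 9 + m ^ 10 + m ^ 11)) * (m - 1) = 1 := by ring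
private lemma bzm_48 (m : ℤ) : (1:ℤ) * ((1:ℤ) + (-1) * m ^ 8 + m ^ 16) + (-(m ^ 8 + m ^ 9 + m ^ 10 + m ^ 11 + m ^ 12 + m ^ 13 + m ^ 14 + m ^ 15)) * (m - 1) = 1 := by ring

set_option maxHeartbeats 1000000 in
set_option maxRecDepth 100000 in
theorem stmt_17 (m : ℤ) (hm : 1 < m) :
    {k : ℕ | 0 < k ∧ ∀ n : ℕ, 1 ≤ n →
      1 < (k : ℤ) * (m - 1) * m ^ n - 1 ∧
        ¬ Prime ((k : ℤ) * (m - 1) * m ^ n - 1)}.Infinite := by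
  have hm2 : (2:ℤ) ≤ m := by linarith
  have hp2 : (4:ℤ) ≤ m ^ 2 := by nlinarith [hm2]
  have hp3 : (8:ℤ) ≤ m ^ 3 := by
    nlinarith [mul_le_mul hm2 hp2 (by norm_num : (0:ℤ) ≤ 4) (by linarith : (0:ℤ) ≤ m)]
  have hp4 : (16:ℤ) ≤ m ^ 4 := by
    nlinarith [mul_le_mul hp2 hp2 (by norm_num : (0:ℤ) ≤ 4) (by linarith : (0:ℤ) ≤ m ^ 2)]
  have hp6 : (64:ℤ) ≤ m ^ 6 := by
    nlinarith [mul_le_mul hp2 hp4 (by norm_num : (0:ℤ) ≤ 16) (by linarith : (0:ℤ) ≤ m ^ 2)]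
  have hp8 : (256:ℤ) ≤ m ^ 8 := by
    nlinarith [mul_le_mul hp4 hp4 (by norm_num : (0:ℤ) ≤ 16) (by linarith : (0:ℤ) ≤ m ^ 4)]
  have h2m : (2:ℤ) ≤ m ^ 144 := by
    have h := pow_le_pow_left₀ (by norm_num : (0:ℤ) ≤ 2) hm2 144
    have h2 : (2:ℤ) ≤ 2 ^ 144 := by norm_num
    linarith
  obtain ⟨P3, hP3gt, hP3dvd, hP3c2, hP3c3⟩ :=
    strip6 ((1:ℤ) + m + m ^ 2) (by linarith [hp2, hm2]) (nd4_3 m) (nd9_3 m)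
  obtain ⟨P4, hP4gt, hP4dvd, hP4c2, hP4c3⟩ :=
    strip2 ((1:ℤ) + m ^ 2) (by linarith [hp2]) (nd4_4 m) (nd3_4 m)
  obtain ⟨P8, hP8gt, hP8dvd, hP8c2, hP8c3⟩ :=
    strip2 ((1:ℤ) + m ^ 4) (by linarith [hp4]) (nd4_8 m) (nd3_8 m)
  obtain ⟨P9, hP9gt, hP9dvd, hP9c2, hP9c3⟩ :=
    strip6 ((1:ℤ) + m ^ 3 + m ^ 6) (by linarith [hp6, hp3]) (nd4_9 m) (nd9_9 m)
  obtain ⟨P12, hP12gt, hP12dvd, hP12c2, hP12c3⟩ :=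
    strip2 ((1:ℤ) + (-1) * m ^ 2 + m ^ 4) (by nlinarith [hp2, sq_nonneg (m ^ 2 - 1)]) (nd4_12 m) (nd3_12 m)
  obtain ⟨P16, hP16gt, hP16dvd, hP16c2, hP16c3⟩ :=
    strip2 ((1:ℤ) + m ^ 8) (by linarith [hp8]) (nd4_16 m) (nd3_16 m)
  obtain ⟨P18, hP18gt, hP18dvd, hP18c2, hP18c3⟩ :=
    strip6 ((1:ℤ) + (-1) * m ^ 3 + m ^ 6) (by nlinarith [hp3, sq_nonneg (m ^ 3 - 1)]) (nd4_18 m) (nd9_18 m)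
  obtain ⟨P24, hP24gt, hP24dvd, hP24c2, hP24c3⟩ :=
    strip2 ((1:ℤ) + (-1) * m ^ 4 + m ^ 8) (by nlinarith [hp4, sq_nonneg (m ^ 4 - 1)]) (nd4_24 m) (nd3_24 m)
  obtain ⟨P36, hP36gt, hP36dvd, hP36c2, hP36c3⟩ :=
    strip2 ((1:ℤ) + (-1) * m ^ 6 + m ^ 12) (by nlinarith [hp6, sq_nonneg (m ^ 6 - 1)]) (nd4_36 m) (nd3_36 m)
  obtain ⟨P48, hP48gt, hP48dvd, hP48c2, hP48c3⟩ :=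
    strip2 ((1:ℤ) + (-1) * m ^ 8 + m ^ 16) (by nlinarith [hp8, sq_nonneg (m ^ 8 - 1)]) (nd4_48 m) (nd3_48 m)
  obtain ⟨P6, hP6gt, hP6dvd⟩ : ∃ Ψ : ℤ, 1 < Ψ ∧ Ψ ∣ ((1:ℤ) + (-1) * m + m ^ 2) := by
    rcases eq_or_lt_of_le hm2 with h2 | h3
    · exact ⟨3, by norm_num, ⟨1, by rw [← h2]; norm_num⟩⟩
    · have hm3 : (3:ℤ) ≤ m := by omega
      obtain ⟨Ψ, h1, hd, _, _⟩ := strip6 ((1:ℤ) + (-1) * m + m ^ 2) (by nlinarith [hm3]) (nd4_6 m) (nd9_6 m)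
      exact ⟨Ψ, h1, hd⟩
  have hD3 : P3 ∣ m ^ 3 - 1 := hP3dvd.trans ⟨((-1:ℤ) + m), by ring⟩
  have hE3 : P3 ∣ m ^ 144 - 1 := by
    have h := sub_dvd_pow_sub_pow (m ^ 3 : ℤ) 1 48
    norm_num [← pow_mul] at h
    exact hD3.trans h
  have hD4 : P4 ∣ m ^ 4 - 1 := hP4dvd.trans ⟨((-1:ℤ) + m ^ 2), by ring⟩
  have hE4 : P4 ∣ m ^ 144 - 1 := by
    have h := sub_dvd_pow_sub_pow (m ^ 4 : ℤ) 1 36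
    norm_num [← pow_mul] at h
    exact hD4.trans h
  have hD6 : P6 ∣ m ^ 6 - 1 := hP6dvd.trans ⟨((-1:ℤ) + (-1) * m + m ^ 3 + m ^ 4), by ring⟩
  have hE6 : P6 ∣ m ^ 144 - 1 := by
    have h := sub_dvd_pow_sub_pow (m ^ 6 : ℤ) 1 24
    norm_num [← pow_mul] at h
    exact hD6.trans h
  have hD8 : P8 ∣ m ^ 8 - 1 := hP8dvd.trans ⟨((-1:ℤ) + m ^ 4), by ring⟩
  have hE8 : P8 ∣ m ^ 144 - 1 := by
    have h := sub_dvd_pow_sub_pow (m ^ 8 : ℤ) 1 18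
    norm_num [← pow_mul] at h
    exact hD8.trans h
  have hD9 : P9 ∣ m ^ 9 - 1 := hP9dvd.trans ⟨((-1:ℤ) + m ^ 3), by ring⟩
  have hE9 : P9 ∣ m ^ 144 - 1 := by
    have h := sub_dvd_pow_sub_pow (m ^ 9 : ℤ) 1 16
    norm_num [← pow_mul] at h
    exact hD9.trans h
  have hD12 : P12 ∣ m ^ 12 - 1 := hP12dvd.trans ⟨((-1:ℤ) + (-1) * m ^ 2 + m ^ 6 + m ^ 8), by ring⟩
  have hE12 : P12 ∣ m ^ 144 - 1 := by
    have h := sub_dvd_pow_sub_pow (m ^ 12 : ℤ) 1 12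
    norm_num [← pow_mul] at h
    exact hD12.trans h
  have hD16 : P16 ∣ m ^ 16 - 1 := hP16dvd.trans ⟨((-1:ℤ) + m ^ 8), by ring⟩
  have hE16 : P16 ∣ m ^ 144 - 1 := by
    have h := sub_dvd_pow_sub_pow (m ^ 16 : ℤ) 1 9
    norm_num [← pow_mul] at h
    exact hD16.trans h
  have hD18 : P18 ∣ m ^ 18 - 1 := hP18dvd.trans ⟨((-1:ℤ) + (-1) * m ^ 3 + m ^ 9 + m ^ 12), by ring⟩
  have hE18 : P18 ∣ m ^ 144 - 1 := by
    have h := sub_dvd_pow_sub_pow (m ^ 18 : ℤ) 1 8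
    norm_num [← pow_mul] at h
    exact hD18.trans h
  have hD24 : P24 ∣ m ^ 24 - 1 := hP24dvd.trans ⟨((-1:ℤ) + (-1) * m ^ 4 + m ^ 12 + m ^ 16), by ring⟩
  have hE24 : P24 ∣ m ^ 144 - 1 := by
    have h := sub_dvd_pow_sub_pow (m ^ 24 : ℤ) 1 6
    norm_num [← pow_mul] at h
    exact hD24.trans h
  have hD36 : P36 ∣ m ^ 36 - 1 := hP36dvd.trans ⟨((-1:ℤ) + (-1) * m ^ 6 + m ^ 18 + m ^ 24), by ring⟩
  have hE36 : P36 ∣ m ^ 144 - 1 := by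
    have h := sub_dvd_pow_sub_pow (m ^ 36 : ℤ) 1 4
    norm_num [← pow_mul] at h
    exact hD36.trans h
  have hD48 : P48 ∣ m ^ 48 - 1 := hP48dvd.trans ⟨((-1:ℤ) + (-1) * m ^ 8 + m ^ 24 + m ^ 32), by ring⟩
  have hE48 : P48 ∣ m ^ 144 - 1 := by
    have h := sub_dvd_pow_sub_pow (m ^ 48 : ℤ) 1 3
    norm_num [← pow_mul] at h
    exact hD48.trans h
  obtain ⟨w3, hw3⟩ := hP3dvd
  obtain ⟨w4, hw4⟩ := hP4dvd
  obtain ⟨w6, hw6⟩ := hP6dvd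
  obtain ⟨w8, hw8⟩ := hP8dvd
  obtain ⟨w9, hw9⟩ := hP9dvd
  obtain ⟨w12, hw12⟩ := hP12dvd
  obtain ⟨w16, hw16⟩ := hP16dvd
  obtain ⟨w18, hw18⟩ := hP18dvd
  obtain ⟨w24, hw24⟩ := hP24dvd
  obtain ⟨w36, hw36⟩ := hP36dvd
  obtain ⟨w48, hw48⟩ := hP48dvd
  have cpm_3 : IsCoprime P3 (m - 1) := by
    have key : ((1:ℤ) * w3) * P3 + ((-2:ℤ) + (-1) * m) * (m - 1) = 3 := by
      linear_combination bzm_3 m - (1:ℤ) * hw3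
    exact coprime_of_bezout key hP3c3
  have cpm_4 : IsCoprime P4 (m - 1) := by
    have key : ((1:ℤ) * w4) * P4 + ((-1:ℤ) + (-1) * m) * (m - 1) = 2 := by
      linear_combination bzm_4 m - (1:ℤ) * hw4
    exact coprime_of_bezout key hP4c2
  have cpm_6 : IsCoprime P6 (m - 1) := by
    have key : ((1:ℤ) * w6) * P6 + ((-1) * m) * (m - 1) = 1 := by
      linear_combination bzm_6 m - (1:ℤ) * hw6
    exact coprime_of_bezout key isCoprime_one_right
  have cpm_8 : IsCoprime P8 (m - 1) := by
    have key : ((1:ℤ) * w8) * P8 + ((-1:ℤ) + (-1) * m + (-1) * m ^ 2 + (-1) * m ^ 3) * (m - 1) = 2 := by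
      linear_combination bzm_8 m - (1:ℤ) * hw8
    exact coprime_of_bezout key hP8c2
  have cpm_9 : IsCoprime P9 (m - 1) := by
    have key : ((1:ℤ) * w9) * P9 + ((-2:ℤ) + (-2) * m + (-2) * m ^ 2 + (-1) * m ^ 3 + (-1) * m ^ 4 + (-1) * m ^ 5) * (m - 1) = 3 := by
      linear_combination bzm_9 m - (1:ℤ) * hw9
    exact coprime_of_bezout key hP9c3
  have cpm_12 : IsCoprime P12 (m - 1) := by
    have key : ((1:ℤ) * w12) * P12 + ((-1) * m ^ 2 + (-1) * m ^ 3) * (m - 1) = 1 := by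
      linear_combination bzm_12 m - (1:ℤ) * hw12
    exact coprime_of_bezout key isCoprime_one_right
  have cpm_16 : IsCoprime P16 (m - 1) := by
    have key : ((1:ℤ) * w16) * P16 + ((-1:ℤ) + (-1) * m + (-1) * m ^ 2 + (-1) * m ^ 3 + (-1) * m ^ 4 + (-1) * m ^ 5 + (-1) * m ^ 6 + (-1) * m ^ 7) * (m - 1) = 2 := by
      linear_combination bzm_16 m - (1:ℤ) * hw16
    exact coprime_of_bezout key hP16c2
  have cpm_18 : IsCoprime P18 (m - 1) := by
    have key : ((1:ℤ) * w18) * P18 + ((-1) * m ^ 3 + (-1) * m ^ 4 + (-1) * m ^ 5) * (m - 1) = 1 := by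
      linear_combination bzm_18 m - (1:ℤ) * hw18
    exact coprime_of_bezout key isCoprime_one_right
  have cpm_24 : IsCoprime P24 (m - 1) := by
    have key : ((1:ℤ) * w24) * P24 + ((-1) * m ^ 4 + (-1) * m ^ 5 + (-1) * m ^ 6 + (-1) * m ^ 7) * (m - 1) = 1 := by
      linear_combination bzm_24 m - (1:ℤ) * hw24
    exact coprime_of_bezout key isCoprime_one_right
  have cpm_36 : IsCoprime P36 (m - 1) := by
    have key : ((1:ℤ) * w36) * P36 + ((-1) * m ^ 6 + (-1) * m ^ 7 + (-1) * m ^ 8 + (-1) * m ^ 9 + (-1) * m ^ 10 + (-1) * m ^ 11) * (m - 1) = 1 := by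
      linear_combination bzm_36 m - (1:ℤ) * hw36
    exact coprime_of_bezout key isCoprime_one_right
  have cpm_48 : IsCoprime P48 (m - 1) := by
    have key : ((1:ℤ) * w48) * P48 + ((-1) * m ^ 8 + (-1) * m ^ 9 + (-1) * m ^ 10 + (-1) * m ^ 11 + (-1) * m ^ 12 + (-1) * m ^ 13 + (-1) * m ^ 14 + (-1) * m ^ 15) * (m - 1) = 1 := by
      linear_combination bzm_48 m - (1:ℤ) * hw48
    exact coprime_of_bezout key isCoprime_one_right
  have cp_3_4 : IsCoprime P3 P4 := by
    have key : (((-1) * m) * w3) * P3 + (((1:ℤ) + m) * w4) * P4 = 1 := by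
      linear_combination bz_3_4 m - ((-1) * m) * hw3 - ((1:ℤ) + m) * hw4
    exact coprime_of_bezout key isCoprime_one_right
  have cp_3_8 : IsCoprime P3 P8 := by
    have key : (((1:ℤ) + (-1) * m ^ 2 + m ^ 3) * w3) * P3 + (((-1) * m) * w8) * P8 = 1 := by
      linear_combination bz_3_8 m - ((1:ℤ) + (-1) * m ^ 2 + m ^ 3) * hw3 - ((-1) * m) * hw8
    exact coprime_of_bezout key isCoprime_one_right
  have cp_3_9 : IsCoprime P3 P9 := by
    have key : (((2:ℤ) + (-2) * m + m ^ 3 + (-1) * m ^ 4) * w3) * P3 + (((1:ℤ)) * w9) * P9 = 3 := by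
      linear_combination bz_3_9 m - ((2:ℤ) + (-2) * m + m ^ 3 + (-1) * m ^ 4) * hw3 - ((1:ℤ)) * hw9
    exact coprime_of_bezout key hP3c3
  have cp_3_12 : IsCoprime P3 P12 := by
    have key : (((2:ℤ) + (-1) * m + (-1) * m ^ 2 + m ^ 3) * w3) * P3 + (((-1) * m) * w12) * P12 = 2 := by
      linear_combination bz_3_12 m - ((2:ℤ) + (-1) * m + (-1) * m ^ 2 + m ^ 3) * hw3 - ((-1) * m) * hw12
    exact coprime_of_bezout key hP3c2
  have cp_3_16 : IsCoprime P3 P16 := by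
    have key : (((-1) * m + m ^ 2 + (-1) * m ^ 4 + m ^ 5 + (-1) * m ^ 7) * w3) * P3 + (((1:ℤ) + m) * w16) * P16 = 1 := by
      linear_combination bz_3_16 m - ((-1) * m + m ^ 2 + (-1) * m ^ 4 + m ^ 5 + (-1) * m ^ 7) * hw3 - ((1:ℤ) + m) * hw16
    exact coprime_of_bezout key isCoprime_one_right
  have cp_3_18 : IsCoprime P3 P18 := by
    have key : ((m ^ 3 + (-1) * m ^ 4) * w3) * P3 + (((1:ℤ)) * w18) * P18 = 1 := by
      linear_combination bz_3_18 m - (m ^ 3 + (-1) * m ^ 4) * hw3 - ((1:ℤ)) * hw18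
    exact coprime_of_bezout key isCoprime_one_right
  have cp_3_24 : IsCoprime P3 P24 := by
    have key : (((1:ℤ) + (-2) * m + m ^ 2 + m ^ 3 + (-1) * m ^ 4 + m ^ 5 + (-1) * m ^ 7) * w3) * P3 + (((1:ℤ) + m) * w24) * P24 = 2 := by
      linear_combination bz_3_24 m - ((1:ℤ) + (-2) * m + m ^ 2 + m ^ 3 + (-1) * m ^ 4 + m ^ 5 + (-1) * m ^ 7) * hw3 - ((1:ℤ) + m) * hw24
    exact coprime_of_bezout key hP3c2
  have cp_3_36 : IsCoprime P3 P36 := by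
    have key : ((m ^ 6 + (-1) * m ^ 7 + m ^ 9 + (-1) * m ^ 10) * w3) * P3 + (((1:ℤ)) * w36) * P36 = 1 := by
      linear_combination bz_3_36 m - (m ^ 6 + (-1) * m ^ 7 + m ^ 9 + (-1) * m ^ 10) * hw3 - ((1:ℤ)) * hw36
    exact coprime_of_bezout key isCoprime_one_right
  have cp_3_48 : IsCoprime P3 P48 := by
    have key : (((2:ℤ) + (-1) * m + (-1) * m ^ 2 + (2) * m ^ 3 + (-1) * m ^ 4 + (-1) * m ^ 5 + (2) * m ^ 6 + (-1) * m ^ 7 + (-1) * m ^ 8 + m ^ 9 + (-1) * m ^ 11 + m ^ 12 + (-1) * m ^ 14 + m ^ 15) * w3) * P3 + (((-1) * m) * w48) * P48 = 2 := by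
      linear_combination bz_3_48 m - ((2:ℤ) + (-1) * m + (-1) * m ^ 2 + (2) * m ^ 3 + (-1) * m ^ 4 + (-1) * m ^ 5 + (2) * m ^ 6 + (-1) * m ^ 7 + (-1) * m ^ 8 + m ^ 9 + (-1) * m ^ 11 + m ^ 12 + (-1) * m ^ 14 + m ^ 15) * hw3 - ((-1) * m) * hw48
    exact coprime_of_bezout key hP3c2
  have cp_3_6 : IsCoprime P3 P6 := by
    have key : (((1:ℤ) + (-1) * m) * w3) * P3 + (((1:ℤ) + m) * w6) * P6 = 2 := by
      linear_combination bz_3_6 m - ((1:ℤ) + (-1) * m) * hw3 - ((1:ℤ) + m) * hw6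
    exact coprime_of_bezout key hP3c2
  have cp_4_8 : IsCoprime P4 P8 := by
    have key : (((1:ℤ) + (-1) * m ^ 2) * w4) * P4 + (((1:ℤ)) * w8) * P8 = 2 := by
      linear_combination bz_4_8 m - ((1:ℤ) + (-1) * m ^ 2) * hw4 - ((1:ℤ)) * hw8
    exact coprime_of_bezout key hP4c2
  have cp_4_9 : IsCoprime P4 P9 := by
    have key : (((1:ℤ) + (-1) * m + (-1) * m ^ 2 + m ^ 3 + (-1) * m ^ 5) * w4) * P4 + ((m) * w9) * P9 = 1 := by
      linear_combination bz_4_9 m - ((1:ℤ) + (-1) * m + (-1) * m ^ 2 + m ^ 3 + (-1) * m ^ 5) * hw4 - (m) * hw9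
    exact coprime_of_bezout key isCoprime_one_right
  have cp_4_12 : IsCoprime P4 P12 := by
    have key : (((2:ℤ) + (-1) * m ^ 2) * w4) * P4 + (((1:ℤ)) * w12) * P12 = 3 := by
      linear_combination bz_4_12 m - ((2:ℤ) + (-1) * m ^ 2) * hw4 - ((1:ℤ)) * hw12
    exact coprime_of_bezout key hP4c3
  have cp_4_16 : IsCoprime P4 P16 := by
    have key : (((1:ℤ) + (-1) * m ^ 2 + m ^ 4 + (-1) * m ^ 6) * w4) * P4 + (((1:ℤ)) * w16) * P16 = 2 := by
      linear_combination bz_4_16 m - ((1:ℤ) + (-1) * m ^ 2 + m ^ 4 + (-1) * m ^ 6) * hw4 - ((1:ℤ)) * hw16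
    exact coprime_of_bezout key hP4c2
  have cp_4_18 : IsCoprime P4 P18 := by
    have key : (((1:ℤ) + m + (-1) * m ^ 2 + (-1) * m ^ 3 + m ^ 5) * w4) * P4 + (((-1) * m) * w18) * P18 = 1 := by
      linear_combination bz_4_18 m - ((1:ℤ) + m + (-1) * m ^ 2 + (-1) * m ^ 3 + m ^ 5) * hw4 - ((-1) * m) * hw18
    exact coprime_of_bezout key isCoprime_one_right
  have cp_4_24 : IsCoprime P4 P24 := by
    have key : ((m ^ 4 + (-1) * m ^ 6) * w4) * P4 + (((1:ℤ)) * w24) * P24 = 1 := by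
      linear_combination bz_4_24 m - (m ^ 4 + (-1) * m ^ 6) * hw4 - ((1:ℤ)) * hw24
    exact coprime_of_bezout key isCoprime_one_right
  have cp_4_36 : IsCoprime P4 P36 := by
    have key : (((2:ℤ) + (-2) * m ^ 2 + (2) * m ^ 4 + (-1) * m ^ 6 + m ^ 8 + (-1) * m ^ 10) * w4) * P4 + (((1:ℤ)) * w36) * P36 = 3 := by
      linear_combination bz_4_36 m - ((2:ℤ) + (-2) * m ^ 2 + (2) * m ^ 4 + (-1) * m ^ 6 + m ^ 8 + (-1) * m ^ 10) * hw4 - ((1:ℤ)) * hw36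
    exact coprime_of_bezout key hP4c3
  have cp_4_48 : IsCoprime P4 P48 := by
    have key : ((m ^ 8 + (-1) * m ^ 10 + m ^ 12 + (-1) * m ^ 14) * w4) * P4 + (((1:ℤ)) * w48) * P48 = 1 := by
      linear_combination bz_4_48 m - (m ^ 8 + (-1) * m ^ 10 + m ^ 12 + (-1) * m ^ 14) * hw4 - ((1:ℤ)) * hw48
    exact coprime_of_bezout key isCoprime_one_right
  have cp_4_6 : IsCoprime P4 P6 := by
    have key : (((1:ℤ) + (-1) * m) * w4) * P4 + ((m) * w6) * P6 = 1 := by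
      linear_combination bz_4_6 m - ((1:ℤ) + (-1) * m) * hw4 - (m) * hw6
    exact coprime_of_bezout key isCoprime_one_right
  have cp_8_9 : IsCoprime P8 P9 := by
    have key : (((-1) * m + (-1) * m ^ 2 + (-1) * m ^ 3 + (-1) * m ^ 4) * w8) * P8 + (((1:ℤ) + m + m ^ 2) * w9) * P9 = 1 := by
      linear_combination bz_8_9 m - ((-1) * m + (-1) * m ^ 2 + (-1) * m ^ 3 + (-1) * m ^ 4) * hw8 - ((1:ℤ) + m + m ^ 2) * hw9
    exact coprime_of_bezout key isCoprime_one_right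
  have cp_8_12 : IsCoprime P8 P12 := by
    have key : (((1:ℤ) + (-1) * m ^ 2) * w8) * P8 + ((m ^ 2) * w12) * P12 = 1 := by
      linear_combination bz_8_12 m - ((1:ℤ) + (-1) * m ^ 2) * hw8 - (m ^ 2) * hw12
    exact coprime_of_bezout key isCoprime_one_right
  have cp_8_16 : IsCoprime P8 P16 := by
    have key : (((1:ℤ) + (-1) * m ^ 4) * w8) * P8 + (((1:ℤ)) * w16) * P16 = 2 := by
      linear_combination bz_8_16 m - ((1:ℤ) + (-1) * m ^ 4) * hw8 - ((1:ℤ)) * hw16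
    exact coprime_of_bezout key hP8c2
  have cp_8_18 : IsCoprime P8 P18 := by
    have key : ((m + (-1) * m ^ 2 + m ^ 3 + (-1) * m ^ 4) * w8) * P8 + (((1:ℤ) + (-1) * m + m ^ 2) * w18) * P18 = 1 := by
      linear_combination bz_8_18 m - (m + (-1) * m ^ 2 + m ^ 3 + (-1) * m ^ 4) * hw8 - ((1:ℤ) + (-1) * m + m ^ 2) * hw18
    exact coprime_of_bezout key isCoprime_one_right
  have cp_8_24 : IsCoprime P8 P24 := by
    have key : (((2:ℤ) + (-1) * m ^ 4) * w8) * P8 + (((1:ℤ)) * w24) * P24 = 3 := by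
      linear_combination bz_8_24 m - ((2:ℤ) + (-1) * m ^ 4) * hw8 - ((1:ℤ)) * hw24
    exact coprime_of_bezout key hP8c3
  have cp_8_36 : IsCoprime P8 P36 := by
    have key : (((1:ℤ) + m ^ 2 + (-1) * m ^ 4 + (-1) * m ^ 6 + m ^ 10) * w8) * P8 + (((-1) * m ^ 2) * w36) * P36 = 1 := by
      linear_combination bz_8_36 m - ((1:ℤ) + m ^ 2 + (-1) * m ^ 4 + (-1) * m ^ 6 + m ^ 10) * hw8 - ((-1) * m ^ 2) * hw36
    exact coprime_of_bezout key isCoprime_one_right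
  have cp_8_48 : IsCoprime P8 P48 := by
    have key : ((m ^ 8 + (-1) * m ^ 12) * w8) * P8 + (((1:ℤ)) * w48) * P48 = 1 := by
      linear_combination bz_8_48 m - (m ^ 8 + (-1) * m ^ 12) * hw8 - ((1:ℤ)) * hw48
    exact coprime_of_bezout key isCoprime_one_right
  have cp_8_6 : IsCoprime P8 P6 := by
    have key : ((m) * w8) * P8 + (((1:ℤ) + (-1) * m ^ 2 + (-1) * m ^ 3) * w6) * P6 = 1 := by
      linear_combination bz_6_8 m - ((1:ℤ) + (-1) * m ^ 2 + (-1) * m ^ 3) * hw6 - (m) * hw8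
    exact coprime_of_bezout key isCoprime_one_right
  have cp_9_12 : IsCoprime P9 P12 := by
    have key : (((-1) * m ^ 3) * w9) * P9 + (((1:ℤ) + m ^ 2 + m ^ 3 + m ^ 5) * w12) * P12 = 1 := by
      linear_combination bz_9_12 m - ((-1) * m ^ 3) * hw9 - ((1:ℤ) + m ^ 2 + m ^ 3 + m ^ 5) * hw12
    exact coprime_of_bezout key isCoprime_one_right
  have cp_9_16 : IsCoprime P9 P16 := by
    have key : (((-1) * m ^ 3 + m ^ 4 + (-1) * m ^ 5 + m ^ 6 + (-1) * m ^ 7) * w9) * P9 + (((1:ℤ) + m ^ 3 + (-1) * m ^ 4 + m ^ 5) * w16) * P16 = 1 := by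
      linear_combination bz_9_16 m - ((-1) * m ^ 3 + m ^ 4 + (-1) * m ^ 5 + m ^ 6 + (-1) * m ^ 7) * hw9 - ((1:ℤ) + m ^ 3 + (-1) * m ^ 4 + m ^ 5) * hw16
    exact coprime_of_bezout key isCoprime_one_right
  have cp_9_18 : IsCoprime P9 P18 := by
    have key : (((1:ℤ) + (-1) * m ^ 3) * w9) * P9 + (((1:ℤ) + m ^ 3) * w18) * P18 = 2 := by
      linear_combination bz_9_18 m - ((1:ℤ) + (-1) * m ^ 3) * hw9 - ((1:ℤ) + m ^ 3) * hw18
    exact coprime_of_bezout key hP9c2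
  have cp_9_24 : IsCoprime P9 P24 := by
    have key : (((1:ℤ) + (-1) * m + m ^ 5 + (-1) * m ^ 6) * w9) * P9 + ((m + (-1) * m ^ 3 + m ^ 4) * w24) * P24 = 1 := by
      linear_combination bz_9_24 m - ((1:ℤ) + (-1) * m + m ^ 5 + (-1) * m ^ 6) * hw9 - (m + (-1) * m ^ 3 + m ^ 4) * hw24
    exact coprime_of_bezout key isCoprime_one_right
  have cp_9_36 : IsCoprime P9 P36 := by
    have key : (((2:ℤ) + (-1) * m ^ 3 + (-1) * m ^ 6 + m ^ 9) * w9) * P9 + (((-1) * m ^ 3) * w36) * P36 = 2 := by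
      linear_combination bz_9_36 m - ((2:ℤ) + (-1) * m ^ 3 + (-1) * m ^ 6 + m ^ 9) * hw9 - ((-1) * m ^ 3) * hw36
    exact coprime_of_bezout key hP9c2
  have cp_9_48 : IsCoprime P9 P48 := by
    have key : (((-1) * m ^ 3 + m ^ 5 + m ^ 6 + (-1) * m ^ 12 + (-1) * m ^ 13 + m ^ 15) * w9) * P9 + (((1:ℤ) + m ^ 3 + (-1) * m ^ 5) * w48) * P48 = 1 := by
      linear_combination bz_9_48 m - ((-1) * m ^ 3 + m ^ 5 + m ^ 6 + (-1) * m ^ 12 + (-1) * m ^ 13 + m ^ 15) * hw9 - ((1:ℤ) + m ^ 3 + (-1) * m ^ 5) * hw48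
    exact coprime_of_bezout key isCoprime_one_right
  have cp_9_6 : IsCoprime P9 P6 := by
    have key : (((1:ℤ)) * w9) * P9 + (((-1) * m ^ 3 + (-1) * m ^ 4) * w6) * P6 = 1 := by
      linear_combination bz_6_9 m - ((-1) * m ^ 3 + (-1) * m ^ 4) * hw6 - ((1:ℤ)) * hw9
    exact coprime_of_bezout key isCoprime_one_right
  have cp_12_16 : IsCoprime P12 P16 := by
    have key : (((1:ℤ) + (-1) * m ^ 4 + (-1) * m ^ 6) * w12) * P12 + ((m ^ 2) * w16) * P16 = 1 := by
      linear_combination bz_12_16 m - ((1:ℤ) + (-1) * m ^ 4 + (-1) * m ^ 6) * hw12 - (m ^ 2) * hw16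
    exact coprime_of_bezout key isCoprime_one_right
  have cp_12_18 : IsCoprime P12 P18 := by
    have key : (((1:ℤ) + m ^ 2 + (-1) * m ^ 3 + (-1) * m ^ 5) * w12) * P12 + ((m ^ 3) * w18) * P18 = 1 := by
      linear_combination bz_12_18 m - ((1:ℤ) + m ^ 2 + (-1) * m ^ 3 + (-1) * m ^ 5) * hw12 - (m ^ 3) * hw18
    exact coprime_of_bezout key isCoprime_one_right
  have cp_12_24 : IsCoprime P12 P24 := by
    have key : (((2:ℤ) + m ^ 2 + (-1) * m ^ 4 + (-1) * m ^ 6) * w12) * P12 + ((m ^ 2) * w24) * P24 = 2 := by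
      linear_combination bz_12_24 m - ((2:ℤ) + m ^ 2 + (-1) * m ^ 4 + (-1) * m ^ 6) * hw12 - (m ^ 2) * hw24
    exact coprime_of_bezout key hP12c2
  have cp_12_36 : IsCoprime P12 P36 := by
    have key : (((2:ℤ) + (2) * m ^ 2 + (-1) * m ^ 6 + (-1) * m ^ 8) * w12) * P12 + (((1:ℤ)) * w36) * P36 = 3 := by
      linear_combination bz_12_36 m - ((2:ℤ) + (2) * m ^ 2 + (-1) * m ^ 6 + (-1) * m ^ 8) * hw12 - ((1:ℤ)) * hw36
    exact coprime_of_bezout key hP12c3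
  have cp_12_48 : IsCoprime P12 P48 := by
    have key : (((1:ℤ) + (2) * m ^ 2 + m ^ 4 + (-1) * m ^ 6 + (-1) * m ^ 8 + (-1) * m ^ 10 + m ^ 14) * w12) * P12 + (((1:ℤ) + (-1) * m ^ 2) * w48) * P48 = 2 := by
      linear_combination bz_12_48 m - ((1:ℤ) + (2) * m ^ 2 + m ^ 4 + (-1) * m ^ 6 + (-1) * m ^ 8 + (-1) * m ^ 10 + m ^ 14) * hw12 - ((1:ℤ) + (-1) * m ^ 2) * hw48
    exact coprime_of_bezout key hP12c2
  have cp_12_6 : IsCoprime P12 P6 := by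
    have key : ((m) * w12) * P12 + (((2:ℤ) + m + (-1) * m ^ 2 + (-1) * m ^ 3) * w6) * P6 = 2 := by
      linear_combination bz_6_12 m - ((2:ℤ) + m + (-1) * m ^ 2 + (-1) * m ^ 3) * hw6 - (m) * hw12
    exact coprime_of_bezout key hP12c2
  have cp_16_18 : IsCoprime P16 P18 := by
    have key : (((1:ℤ) + (-1) * m ^ 3 + (-1) * m ^ 4 + (-1) * m ^ 5) * w16) * P16 + ((m ^ 3 + m ^ 4 + m ^ 5 + m ^ 6 + m ^ 7) * w18) * P18 = 1 := by
      linear_combination bz_16_18 m - ((1:ℤ) + (-1) * m ^ 3 + (-1) * m ^ 4 + (-1) * m ^ 5) * hw16 - (m ^ 3 + m ^ 4 + m ^ 5 + m ^ 6 + m ^ 7) * hw18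
    exact coprime_of_bezout key isCoprime_one_right
  have cp_16_24 : IsCoprime P16 P24 := by
    have key : (((1:ℤ) + (-1) * m ^ 4) * w16) * P16 + ((m ^ 4) * w24) * P24 = 1 := by
      linear_combination bz_16_24 m - ((1:ℤ) + (-1) * m ^ 4) * hw16 - (m ^ 4) * hw24
    exact coprime_of_bezout key isCoprime_one_right
  have cp_16_36 : IsCoprime P16 P36 := by
    have key : ((m ^ 2 + (-1) * m ^ 4 + m ^ 6 + (-1) * m ^ 8) * w16) * P16 + (((1:ℤ) + (-1) * m ^ 2 + m ^ 4) * w36) * P36 = 1 := by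
      linear_combination bz_16_36 m - (m ^ 2 + (-1) * m ^ 4 + m ^ 6 + (-1) * m ^ 8) * hw16 - ((1:ℤ) + (-1) * m ^ 2 + m ^ 4) * hw36
    exact coprime_of_bezout key isCoprime_one_right
  have cp_16_48 : IsCoprime P16 P48 := by
    have key : (((2:ℤ) + (-1) * m ^ 8) * w16) * P16 + (((1:ℤ)) * w48) * P48 = 3 := by
      linear_combination bz_16_48 m - ((2:ℤ) + (-1) * m ^ 8) * hw16 - ((1:ℤ)) * hw48
    exact coprime_of_bezout key hP16c3
  have cp_16_6 : IsCoprime P16 P6 := by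
    have key : (((1:ℤ) + (-1) * m) * w16) * P16 + ((m + m ^ 2 + (-1) * m ^ 4 + (-1) * m ^ 5 + m ^ 7) * w6) * P6 = 1 := by
      linear_combination bz_6_16 m - (m + m ^ 2 + (-1) * m ^ 4 + (-1) * m ^ 5 + m ^ 7) * hw6 - ((1:ℤ) + (-1) * m) * hw16
    exact coprime_of_bezout key isCoprime_one_right
  have cp_18_24 : IsCoprime P18 P24 := by
    have key : (((1:ℤ) + m + (-1) * m ^ 5 + (-1) * m ^ 6) * w18) * P18 + (((-1) * m + m ^ 3 + m ^ 4) * w24) * P24 = 1 := by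
      linear_combination bz_18_24 m - ((1:ℤ) + m + (-1) * m ^ 5 + (-1) * m ^ 6) * hw18 - ((-1) * m + m ^ 3 + m ^ 4) * hw24
    exact coprime_of_bezout key isCoprime_one_right
  have cp_18_36 : IsCoprime P18 P36 := by
    have key : (((2:ℤ) + m ^ 3 + (-1) * m ^ 6 + (-1) * m ^ 9) * w18) * P18 + ((m ^ 3) * w36) * P36 = 2 := by
      linear_combination bz_18_36 m - ((2:ℤ) + m ^ 3 + (-1) * m ^ 6 + (-1) * m ^ 9) * hw18 - (m ^ 3) * hw36
    exact coprime_of_bezout key hP18c2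
  have cp_18_48 : IsCoprime P18 P48 := by
    have key : ((m ^ 3 + (-1) * m ^ 5 + m ^ 6 + (-1) * m ^ 12 + m ^ 13 + (-1) * m ^ 15) * w18) * P18 + (((1:ℤ) + (-1) * m ^ 3 + m ^ 5) * w48) * P48 = 1 := by
      linear_combination bz_18_48 m - (m ^ 3 + (-1) * m ^ 5 + m ^ 6 + (-1) * m ^ 12 + m ^ 13 + (-1) * m ^ 15) * hw18 - ((1:ℤ) + (-1) * m ^ 3 + m ^ 5) * hw48
    exact coprime_of_bezout key isCoprime_one_right
  have cp_18_6 : IsCoprime P18 P6 := by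
    have key : (((1:ℤ)) * w18) * P18 + (((2:ℤ) + (2) * m + (-1) * m ^ 3 + (-1) * m ^ 4) * w6) * P6 = 3 := by
      linear_combination bz_6_18 m - ((2:ℤ) + (2) * m + (-1) * m ^ 3 + (-1) * m ^ 4) * hw6 - ((1:ℤ)) * hw18
    exact coprime_of_bezout key hP18c3
  have cp_24_36 : IsCoprime P24 P36 := by
    have key : (((1:ℤ) + m ^ 4 + (-1) * m ^ 6 + (-1) * m ^ 10) * w24) * P24 + ((m ^ 6) * w36) * P36 = 1 := by
      linear_combination bz_24_36 m - ((1:ℤ) + m ^ 4 + (-1) * m ^ 6 + (-1) * m ^ 10) * hw24 - (m ^ 6) * hw36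
    exact coprime_of_bezout key isCoprime_one_right
  have cp_24_48 : IsCoprime P24 P48 := by
    have key : (((2:ℤ) + m ^ 4 + (-1) * m ^ 8 + (-1) * m ^ 12) * w24) * P24 + ((m ^ 4) * w48) * P48 = 2 := by
      linear_combination bz_24_48 m - ((2:ℤ) + m ^ 4 + (-1) * m ^ 8 + (-1) * m ^ 12) * hw24 - (m ^ 4) * hw48
    exact coprime_of_bezout key hP24c2
  have cp_24_6 : IsCoprime P24 P6 := by
    have key : (((1:ℤ) + (-1) * m) * w24) * P24 + (((1:ℤ) + (2) * m + m ^ 2 + (-1) * m ^ 3 + (-1) * m ^ 4 + (-1) * m ^ 5 + m ^ 7) * w6) * P6 = 2 := by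
      linear_combination bz_6_24 m - ((1:ℤ) + (2) * m + m ^ 2 + (-1) * m ^ 3 + (-1) * m ^ 4 + (-1) * m ^ 5 + m ^ 7) * hw6 - ((1:ℤ) + (-1) * m) * hw24
    exact coprime_of_bezout key hP24c2
  have cp_36_48 : IsCoprime P36 P48 := by
    have key : (((1:ℤ) + m ^ 2 + (-1) * m ^ 10 + (-1) * m ^ 12) * w36) * P36 + (((-1) * m ^ 2 + m ^ 6 + m ^ 8) * w48) * P48 = 1 := by
      linear_combination bz_36_48 m - ((1:ℤ) + m ^ 2 + (-1) * m ^ 10 + (-1) * m ^ 12) * hw36 - ((-1) * m ^ 2 + m ^ 6 + m ^ 8) * hw48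
    exact coprime_of_bezout key isCoprime_one_right
  have cp_36_6 : IsCoprime P36 P6 := by
    have key : (((1:ℤ)) * w36) * P36 + ((m ^ 6 + m ^ 7 + (-1) * m ^ 9 + (-1) * m ^ 10) * w6) * P6 = 1 := by
      linear_combination bz_6_36 m - (m ^ 6 + m ^ 7 + (-1) * m ^ 9 + (-1) * m ^ 10) * hw6 - ((1:ℤ)) * hw36
    exact coprime_of_bezout key isCoprime_one_right
  have cp_48_6 : IsCoprime P48 P6 := by
    have key : ((m) * w48) * P48 + (((2:ℤ) + m + (-1) * m ^ 2 + (-2) * m ^ 3 + (-1) * m ^ 4 + m ^ 5 + (2) * m ^ 6 + m ^ 7 + (-1) * m ^ 8 + (-1) * m ^ 9 + m ^ 11 + m ^ 12 + (-1) * m ^ 14 + (-1) * m ^ 15) * w6) * P6 = 2 := by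
      linear_combination bz_6_48 m - ((2:ℤ) + m + (-1) * m ^ 2 + (-2) * m ^ 3 + (-1) * m ^ 4 + m ^ 5 + (2) * m ^ 6 + m ^ 7 + (-1) * m ^ 8 + (-1) * m ^ 9 + m ^ 11 + m ^ 12 + (-1) * m ^ 14 + (-1) * m ^ 15) * hw6 - (m) * hw48
    exact coprime_of_bezout key hP48c2
  have co1 : IsCoprime (m - 1) P3 := cpm_3.symm
  obtain ⟨a1, hcr1_0, hcr1_1⟩ := crt2 co1 (0:ℤ) (m ^ 0)
  have co2 : IsCoprime ((m - 1) * P3) P4 := (IsCoprime.mul_left cpm_4.symm cp_3_4)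
  obtain ⟨a2, hl2, hcr2_2⟩ := crt2 co2 a1 (m ^ 0)
  have hdv2_0 : (m - 1) ∣ (m - 1) * P3 := ⟨P3, by ring⟩
  have hcr2_0 : (m - 1) ∣ a2 - (0:ℤ) := carry hdv2_0 hl2 hcr1_0
  have hdv2_1 : P3 ∣ (m - 1) * P3 := ⟨(m - 1), by ring⟩
  have hcr2_1 : P3 ∣ a2 - m ^ 0 := carry hdv2_1 hl2 hcr1_1
  have co3 : IsCoprime ((m - 1) * P3 * P4) P8 := (IsCoprime.mul_left (IsCoprime.mul_left cpm_8.symm cp_3_8) cp_4_8)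
  obtain ⟨a3, hl3, hcr3_3⟩ := crt2 co3 a2 (m ^ 6)
  have hdv3_0 : (m - 1) ∣ (m - 1) * P3 * P4 := ⟨P3 * P4, by ring⟩
  have hcr3_0 : (m - 1) ∣ a3 - (0:ℤ) := carry hdv3_0 hl3 hcr2_0
  have hdv3_1 : P3 ∣ (m - 1) * P3 * P4 := ⟨(m - 1) * P4, by ring⟩
  have hcr3_1 : P3 ∣ a3 - m ^ 0 := carry hdv3_1 hl3 hcr2_1
  have hdv3_2 : P4 ∣ (m - 1) * P3 * P4 := ⟨(m - 1) * P3, by ring⟩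
  have hcr3_2 : P4 ∣ a3 - m ^ 0 := carry hdv3_2 hl3 hcr2_2
  have co4 : IsCoprime ((m - 1) * P3 * P4 * P8) P9 := (IsCoprime.mul_left (IsCoprime.mul_left (IsCoprime.mul_left cpm_9.symm cp_3_9) cp_4_9) cp_8_9)
  obtain ⟨a4, hl4, hcr4_4⟩ := crt2 co4 a3 (m ^ 7)
  have hdv4_0 : (m - 1) ∣ (m - 1) * P3 * P4 * P8 := ⟨P3 * P4 * P8, by ring⟩
  have hcr4_0 : (m - 1) ∣ a4 - (0:ℤ) := carry hdv4_0 hl4 hcr3_0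
  have hdv4_1 : P3 ∣ (m - 1) * P3 * P4 * P8 := ⟨(m - 1) * P4 * P8, by ring⟩
  have hcr4_1 : P3 ∣ a4 - m ^ 0 := carry hdv4_1 hl4 hcr3_1
  have hdv4_2 : P4 ∣ (m - 1) * P3 * P4 * P8 := ⟨(m - 1) * P3 * P8, by ring⟩
  have hcr4_2 : P4 ∣ a4 - m ^ 0 := carry hdv4_2 hl4 hcr3_2
  have hdv4_3 : P8 ∣ (m - 1) * P3 * P4 * P8 := ⟨(m - 1) * P3 * P4, by ring⟩
  have hcr4_3 : P8 ∣ a4 - m ^ 6 := carry hdv4_3 hl4 hcr3_3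
  have co5 : IsCoprime ((m - 1) * P3 * P4 * P8 * P9) P12 := (IsCoprime.mul_left (IsCoprime.mul_left (IsCoprime.mul_left (IsCoprime.mul_left cpm_12.symm cp_3_12) cp_4_12) cp_8_12) cp_9_12)
  obtain ⟨a5, hl5, hcr5_5⟩ := crt2 co5 a4 (m ^ 7)
  have hdv5_0 : (m - 1) ∣ (m - 1) * P3 * P4 * P8 * P9 := ⟨P3 * P4 * P8 * P9, by ring⟩
  have hcr5_0 : (m - 1) ∣ a5 - (0:ℤ) := carry hdv5_0 hl5 hcr4_0
  have hdv5_1 : P3 ∣ (m - 1) * P3 * P4 * P8 * P9 := ⟨(m - 1) * P4 * P8 * P9, by ring⟩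
  have hcr5_1 : P3 ∣ a5 - m ^ 0 := carry hdv5_1 hl5 hcr4_1
  have hdv5_2 : P4 ∣ (m - 1) * P3 * P4 * P8 * P9 := ⟨(m - 1) * P3 * P8 * P9, by ring⟩
  have hcr5_2 : P4 ∣ a5 - m ^ 0 := carry hdv5_2 hl5 hcr4_2
  have hdv5_3 : P8 ∣ (m - 1) * P3 * P4 * P8 * P9 := ⟨(m - 1) * P3 * P4 * P9, by ring⟩
  have hcr5_3 : P8 ∣ a5 - m ^ 6 := carry hdv5_3 hl5 hcr4_3
  have hdv5_4 : P9 ∣ (m - 1) * P3 * P4 * P8 * P9 := ⟨(m - 1) * P3 * P4 * P8, by ring⟩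
  have hcr5_4 : P9 ∣ a5 - m ^ 7 := carry hdv5_4 hl5 hcr4_4
  have co6 : IsCoprime ((m - 1) * P3 * P4 * P8 * P9 * P12) P16 := (IsCoprime.mul_left (IsCoprime.mul_left (IsCoprime.mul_left (IsCoprime.mul_left (IsCoprime.mul_left cpm_16.symm cp_3_16) cp_4_16) cp_8_16) cp_9_16) cp_12_16)
  obtain ⟨a6, hl6, hcr6_6⟩ := crt2 co6 a5 (m ^ 10)
  have hdv6_0 : (m - 1) ∣ (m - 1) * P3 * P4 * P8 * P9 * P12 := ⟨P3 * P4 * P8 * P9 * P12, by ring⟩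
  have hcr6_0 : (m - 1) ∣ a6 - (0:ℤ) := carry hdv6_0 hl6 hcr5_0
  have hdv6_1 : P3 ∣ (m - 1) * P3 * P4 * P8 * P9 * P12 := ⟨(m - 1) * P4 * P8 * P9 * P12, by ring⟩
  have hcr6_1 : P3 ∣ a6 - m ^ 0 := carry hdv6_1 hl6 hcr5_1
  have hdv6_2 : P4 ∣ (m - 1) * P3 * P4 * P8 * P9 * P12 := ⟨(m - 1) * P3 * P8 * P9 * P12, by ring⟩
  have hcr6_2 : P4 ∣ a6 - m ^ 0 := carry hdv6_2 hl6 hcr5_2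
  have hdv6_3 : P8 ∣ (m - 1) * P3 * P4 * P8 * P9 * P12 := ⟨(m - 1) * P3 * P4 * P9 * P12, by ring⟩
  have hcr6_3 : P8 ∣ a6 - m ^ 6 := carry hdv6_3 hl6 hcr5_3
  have hdv6_4 : P9 ∣ (m - 1) * P3 * P4 * P8 * P9 * P12 := ⟨(m - 1) * P3 * P4 * P8 * P12, by ring⟩
  have hcr6_4 : P9 ∣ a6 - m ^ 7 := carry hdv6_4 hl6 hcr5_4
  have hdv6_5 : P12 ∣ (m - 1) * P3 * P4 * P8 * P9 * P12 := ⟨(m - 1) * P3 * P4 * P8 * P9, by ring⟩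
  have hcr6_5 : P12 ∣ a6 - m ^ 7 := carry hdv6_5 hl6 hcr5_5
  have co7 : IsCoprime ((m - 1) * P3 * P4 * P8 * P9 * P12 * P16) P18 := (IsCoprime.mul_left (IsCoprime.mul_left (IsCoprime.mul_left (IsCoprime.mul_left (IsCoprime.mul_left (IsCoprime.mul_left cpm_18.symm cp_3_18) cp_4_18) cp_8_18) cp_9_18) cp_12_18) cp_16_18)
  obtain ⟨a7, hl7, hcr7_7⟩ := crt2 co7 a6 (m ^ 13)
  have hdv7_0 : (m - 1) ∣ (m - 1) * P3 * P4 * P8 * P9 * P12 * P16 := ⟨P3 * P4 * P8 * P9 * P12 * P16, by ring⟩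
  have hcr7_0 : (m - 1) ∣ a7 - (0:ℤ) := carry hdv7_0 hl7 hcr6_0
  have hdv7_1 : P3 ∣ (m - 1) * P3 * P4 * P8 * P9 * P12 * P16 := ⟨(m - 1) * P4 * P8 * P9 * P12 * P16, by ring⟩
  have hcr7_1 : P3 ∣ a7 - m ^ 0 := carry hdv7_1 hl7 hcr6_1
  have hdv7_2 : P4 ∣ (m - 1) * P3 * P4 * P8 * P9 * P12 * P16 := ⟨(m - 1) * P3 * P8 * P9 * P12 * P16, by ring⟩
  have hcr7_2 : P4 ∣ a7 - m ^ 0 := carry hdv7_2 hl7 hcr6_2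
  have hdv7_3 : P8 ∣ (m - 1) * P3 * P4 * P8 * P9 * P12 * P16 := ⟨(m - 1) * P3 * P4 * P9 * P12 * P16, by ring⟩
  have hcr7_3 : P8 ∣ a7 - m ^ 6 := carry hdv7_3 hl7 hcr6_3
  have hdv7_4 : P9 ∣ (m - 1) * P3 * P4 * P8 * P9 * P12 * P16 := ⟨(m - 1) * P3 * P4 * P8 * P12 * P16, by ring⟩
  have hcr7_4 : P9 ∣ a7 - m ^ 7 := carry hdv7_4 hl7 hcr6_4
  have hdv7_5 : P12 ∣ (m - 1) * P3 * P4 * P8 * P9 * P12 * P16 := ⟨(m - 1) * P3 * P4 * P8 * P9 * P16, by ring⟩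
  have hcr7_5 : P12 ∣ a7 - m ^ 7 := carry hdv7_5 hl7 hcr6_5
  have hdv7_6 : P16 ∣ (m - 1) * P3 * P4 * P8 * P9 * P12 * P16 := ⟨(m - 1) * P3 * P4 * P8 * P9 * P12, by ring⟩
  have hcr7_6 : P16 ∣ a7 - m ^ 10 := carry hdv7_6 hl7 hcr6_6
  have co8 : IsCoprime ((m - 1) * P3 * P4 * P8 * P9 * P12 * P16 * P18) P24 := (IsCoprime.mul_left (IsCoprime.mul_left (IsCoprime.mul_left (IsCoprime.mul_left (IsCoprime.mul_left (IsCoprime.mul_left (IsCoprime.mul_left cpm_24.symm cp_3_24) cp_4_24) cp_8_24) cp_9_24) cp_12_24) cp_16_24) cp_18_24)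
  obtain ⟨a8, hl8, hcr8_8⟩ := crt2 co8 a7 (m ^ 2)
  have hdv8_0 : (m - 1) ∣ (m - 1) * P3 * P4 * P8 * P9 * P12 * P16 * P18 := ⟨P3 * P4 * P8 * P9 * P12 * P16 * P18, by ring⟩
  have hcr8_0 : (m - 1) ∣ a8 - (0:ℤ) := carry hdv8_0 hl8 hcr7_0
  have hdv8_1 : P3 ∣ (m - 1) * P3 * P4 * P8 * P9 * P12 * P16 * P18 := ⟨(m - 1) * P4 * P8 * P9 * P12 * P16 * P18, by ring⟩
  have hcr8_1 : P3 ∣ a8 - m ^ 0 := carry hdv8_1 hl8 hcr7_1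
  have hdv8_2 : P4 ∣ (m - 1) * P3 * P4 * P8 * P9 * P12 * P16 * P18 := ⟨(m - 1) * P3 * P8 * P9 * P12 * P16 * P18, by ring⟩
  have hcr8_2 : P4 ∣ a8 - m ^ 0 := carry hdv8_2 hl8 hcr7_2
  have hdv8_3 : P8 ∣ (m - 1) * P3 * P4 * P8 * P9 * P12 * P16 * P18 := ⟨(m - 1) * P3 * P4 * P9 * P12 * P16 * P18, by ring⟩
  have hcr8_3 : P8 ∣ a8 - m ^ 6 := carry hdv8_3 hl8 hcr7_3
  have hdv8_4 : P9 ∣ (m - 1) * P3 * P4 * P8 * P9 * P12 * P16 * P18 := ⟨(m - 1) * P3 * P4 * P8 * P12 * P16 * P18, by ring⟩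
  have hcr8_4 : P9 ∣ a8 - m ^ 7 := carry hdv8_4 hl8 hcr7_4
  have hdv8_5 : P12 ∣ (m - 1) * P3 * P4 * P8 * P9 * P12 * P16 * P18 := ⟨(m - 1) * P3 * P4 * P8 * P9 * P16 * P18, by ring⟩
  have hcr8_5 : P12 ∣ a8 - m ^ 7 := carry hdv8_5 hl8 hcr7_5
  have hdv8_6 : P16 ∣ (m - 1) * P3 * P4 * P8 * P9 * P12 * P16 * P18 := ⟨(m - 1) * P3 * P4 * P8 * P9 * P12 * P18, by ring⟩
  have hcr8_6 : P16 ∣ a8 - m ^ 10 := carry hdv8_6 hl8 hcr7_6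
  have hdv8_7 : P18 ∣ (m - 1) * P3 * P4 * P8 * P9 * P12 * P16 * P18 := ⟨(m - 1) * P3 * P4 * P8 * P9 * P12 * P16, by ring⟩
  have hcr8_7 : P18 ∣ a8 - m ^ 13 := carry hdv8_7 hl8 hcr7_7
  have co9 : IsCoprime ((m - 1) * P3 * P4 * P8 * P9 * P12 * P16 * P18 * P24) P36 := (IsCoprime.mul_left (IsCoprime.mul_left (IsCoprime.mul_left (IsCoprime.mul_left (IsCoprime.mul_left (IsCoprime.mul_left (IsCoprime.mul_left (IsCoprime.mul_left cpm_36.symm cp_3_36) cp_4_36) cp_8_36) cp_9_36) cp_12_36) cp_16_36) cp_18_36) cp_24_36)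
  obtain ⟨a9, hl9, hcr9_9⟩ := crt2 co9 a8 (m ^ 1)
  have hdv9_0 : (m - 1) ∣ (m - 1) * P3 * P4 * P8 * P9 * P12 * P16 * P18 * P24 := ⟨P3 * P4 * P8 * P9 * P12 * P16 * P18 * P24, by ring⟩
  have hcr9_0 : (m - 1) ∣ a9 - (0:ℤ) := carry hdv9_0 hl9 hcr8_0
  have hdv9_1 : P3 ∣ (m - 1) * P3 * P4 * P8 * P9 * P12 * P16 * P18 * P24 := ⟨(m - 1) * P4 * P8 * P9 * P12 * P16 * P18 * P24, by ring⟩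
  have hcr9_1 : P3 ∣ a9 - m ^ 0 := carry hdv9_1 hl9 hcr8_1
  have hdv9_2 : P4 ∣ (m - 1) * P3 * P4 * P8 * P9 * P12 * P16 * P18 * P24 := ⟨(m - 1) * P3 * P8 * P9 * P12 * P16 * P18 * P24, by ring⟩
  have hcr9_2 : P4 ∣ a9 - m ^ 0 := carry hdv9_2 hl9 hcr8_2
  have hdv9_3 : P8 ∣ (m - 1) * P3 * P4 * P8 * P9 * P12 * P16 * P18 * P24 := ⟨(m - 1) * P3 * P4 * P9 * P12 * P16 * P18 * P24, by ring⟩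
  have hcr9_3 : P8 ∣ a9 - m ^ 6 := carry hdv9_3 hl9 hcr8_3
  have hdv9_4 : P9 ∣ (m - 1) * P3 * P4 * P8 * P9 * P12 * P16 * P18 * P24 := ⟨(m - 1) * P3 * P4 * P8 * P12 * P16 * P18 * P24, by ring⟩
  have hcr9_4 : P9 ∣ a9 - m ^ 7 := carry hdv9_4 hl9 hcr8_4
  have hdv9_5 : P12 ∣ (m - 1) * P3 * P4 * P8 * P9 * P12 * P16 * P18 * P24 := ⟨(m - 1) * P3 * P4 * P8 * P9 * P16 * P18 * P24, by ring⟩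
  have hcr9_5 : P12 ∣ a9 - m ^ 7 := carry hdv9_5 hl9 hcr8_5
  have hdv9_6 : P16 ∣ (m - 1) * P3 * P4 * P8 * P9 * P12 * P16 * P18 * P24 := ⟨(m - 1) * P3 * P4 * P8 * P9 * P12 * P18 * P24, by ring⟩
  have hcr9_6 : P16 ∣ a9 - m ^ 10 := carry hdv9_6 hl9 hcr8_6
  have hdv9_7 : P18 ∣ (m - 1) * P3 * P4 * P8 * P9 * P12 * P16 * P18 * P24 := ⟨(m - 1) * P3 * P4 * P8 * P9 * P12 * P16 * P24, by ring⟩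
  have hcr9_7 : P18 ∣ a9 - m ^ 13 := carry hdv9_7 hl9 hcr8_7
  have hdv9_8 : P24 ∣ (m - 1) * P3 * P4 * P8 * P9 * P12 * P16 * P18 * P24 := ⟨(m - 1) * P3 * P4 * P8 * P9 * P12 * P16 * P18, by ring⟩
  have hcr9_8 : P24 ∣ a9 - m ^ 2 := carry hdv9_8 hl9 hcr8_8
  have co10 : IsCoprime ((m - 1) * P3 * P4 * P8 * P9 * P12 * P16 * P18 * P24 * P36) P48 := (IsCoprime.mul_left (IsCoprime.mul_left (IsCoprime.mul_left (IsCoprime.mul_left (IsCoprime.mul_left (IsCoprime.mul_left (IsCoprime.mul_left (IsCoprime.mul_left (IsCoprime.mul_left cpm_48.symm cp_3_48) cp_4_48) cp_8_48) cp_9_48) cp_12_48) cp_16_48) cp_18_48) cp_24_48) cp_36_48)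
  obtain ⟨a10, hl10, hcr10_10⟩ := crt2 co10 a9 (m ^ 34)
  have hdv10_0 : (m - 1) ∣ (m - 1) * P3 * P4 * P8 * P9 * P12 * P16 * P18 * P24 * P36 := ⟨P3 * P4 * P8 * P9 * P12 * P16 * P18 * P24 * P36, by ring⟩
  have hcr10_0 : (m - 1) ∣ a10 - (0:ℤ) := carry hdv10_0 hl10 hcr9_0
  have hdv10_1 : P3 ∣ (m - 1) * P3 * P4 * P8 * P9 * P12 * P16 * P18 * P24 * P36 := ⟨(m - 1) * P4 * P8 * P9 * P12 * P16 * P18 * P24 * P36, by ring⟩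
  have hcr10_1 : P3 ∣ a10 - m ^ 0 := carry hdv10_1 hl10 hcr9_1
  have hdv10_2 : P4 ∣ (m - 1) * P3 * P4 * P8 * P9 * P12 * P16 * P18 * P24 * P36 := ⟨(m - 1) * P3 * P8 * P9 * P12 * P16 * P18 * P24 * P36, by ring⟩
  have hcr10_2 : P4 ∣ a10 - m ^ 0 := carry hdv10_2 hl10 hcr9_2
  have hdv10_3 : P8 ∣ (m - 1) * P3 * P4 * P8 * P9 * P12 * P16 * P18 * P24 * P36 := ⟨(m - 1) * P3 * P4 * P9 * P12 * P16 * P18 * P24 * P36, by ring⟩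
  have hcr10_3 : P8 ∣ a10 - m ^ 6 := carry hdv10_3 hl10 hcr9_3
  have hdv10_4 : P9 ∣ (m - 1) * P3 * P4 * P8 * P9 * P12 * P16 * P18 * P24 * P36 := ⟨(m - 1) * P3 * P4 * P8 * P12 * P16 * P18 * P24 * P36, by ring⟩
  have hcr10_4 : P9 ∣ a10 - m ^ 7 := carry hdv10_4 hl10 hcr9_4
  have hdv10_5 : P12 ∣ (m - 1) * P3 * P4 * P8 * P9 * P12 * P16 * P18 * P24 * P36 := ⟨(m - 1) * P3 * P4 * P8 * P9 * P16 * P18 * P24 * P36, by ring⟩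
  have hcr10_5 : P12 ∣ a10 - m ^ 7 := carry hdv10_5 hl10 hcr9_5
  have hdv10_6 : P16 ∣ (m - 1) * P3 * P4 * P8 * P9 * P12 * P16 * P18 * P24 * P36 := ⟨(m - 1) * P3 * P4 * P8 * P9 * P12 * P18 * P24 * P36, by ring⟩
  have hcr10_6 : P16 ∣ a10 - m ^ 10 := carry hdv10_6 hl10 hcr9_6
  have hdv10_7 : P18 ∣ (m - 1) * P3 * P4 * P8 * P9 * P12 * P16 * P18 * P24 * P36 := ⟨(m - 1) * P3 * P4 * P8 * P9 * P12 * P16 * P24 * P36, by ring⟩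
  have hcr10_7 : P18 ∣ a10 - m ^ 13 := carry hdv10_7 hl10 hcr9_7
  have hdv10_8 : P24 ∣ (m - 1) * P3 * P4 * P8 * P9 * P12 * P16 * P18 * P24 * P36 := ⟨(m - 1) * P3 * P4 * P8 * P9 * P12 * P16 * P18 * P36, by ring⟩
  have hcr10_8 : P24 ∣ a10 - m ^ 2 := carry hdv10_8 hl10 hcr9_8
  have hdv10_9 : P36 ∣ (m - 1) * P3 * P4 * P8 * P9 * P12 * P16 * P18 * P24 * P36 := ⟨(m - 1) * P3 * P4 * P8 * P9 * P12 * P16 * P18 * P24, by ring⟩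
  have hcr10_9 : P36 ∣ a10 - m ^ 1 := carry hdv10_9 hl10 hcr9_9
  have co11 : IsCoprime ((m - 1) * P3 * P4 * P8 * P9 * P12 * P16 * P18 * P24 * P36 * P48) P6 := (IsCoprime.mul_left (IsCoprime.mul_left (IsCoprime.mul_left (IsCoprime.mul_left (IsCoprime.mul_left (IsCoprime.mul_left (IsCoprime.mul_left (IsCoprime.mul_left (IsCoprime.mul_left (IsCoprime.mul_left cpm_6.symm cp_3_6) cp_4_6) cp_8_6) cp_9_6) cp_12_6) cp_16_6) cp_18_6) cp_24_6) cp_36_6) cp_48_6)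
  obtain ⟨a11, hl11, hcr11_11⟩ := crt2 co11 a10 (m ^ 5)
  have hdv11_0 : (m - 1) ∣ (m - 1) * P3 * P4 * P8 * P9 * P12 * P16 * P18 * P24 * P36 * P48 := ⟨P3 * P4 * P8 * P9 * P12 * P16 * P18 * P24 * P36 * P48, by ring⟩
  have hcr11_0 : (m - 1) ∣ a11 - (0:ℤ) := carry hdv11_0 hl11 hcr10_0
  have hdv11_1 : P3 ∣ (m - 1) * P3 * P4 * P8 * P9 * P12 * P16 * P18 * P24 * P36 * P48 := ⟨(m - 1) * P4 * P8 * P9 * P12 * P16 * P18 * P24 * P36 * P48, by ring⟩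
  have hcr11_1 : P3 ∣ a11 - m ^ 0 := carry hdv11_1 hl11 hcr10_1
  have hdv11_2 : P4 ∣ (m - 1) * P3 * P4 * P8 * P9 * P12 * P16 * P18 * P24 * P36 * P48 := ⟨(m - 1) * P3 * P8 * P9 * P12 * P16 * P18 * P24 * P36 * P48, by ring⟩
  have hcr11_2 : P4 ∣ a11 - m ^ 0 := carry hdv11_2 hl11 hcr10_2
  have hdv11_3 : P8 ∣ (m - 1) * P3 * P4 * P8 * P9 * P12 * P16 * P18 * P24 * P36 * P48 := ⟨(m - 1) * P3 * P4 * P9 * P12 * P16 * P18 * P24 * P36 * P48, by ring⟩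
  have hcr11_3 : P8 ∣ a11 - m ^ 6 := carry hdv11_3 hl11 hcr10_3
  have hdv11_4 : P9 ∣ (m - 1) * P3 * P4 * P8 * P9 * P12 * P16 * P18 * P24 * P36 * P48 := ⟨(m - 1) * P3 * P4 * P8 * P12 * P16 * P18 * P24 * P36 * P48, by ring⟩
  have hcr11_4 : P9 ∣ a11 - m ^ 7 := carry hdv11_4 hl11 hcr10_4
  have hdv11_5 : P12 ∣ (m - 1) * P3 * P4 * P8 * P9 * P12 * P16 * P18 * P24 * P36 * P48 := ⟨(m - 1) * P3 * P4 * P8 * P9 * P16 * P18 * P24 * P36 * P48, by ring⟩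
  have hcr11_5 : P12 ∣ a11 - m ^ 7 := carry hdv11_5 hl11 hcr10_5
  have hdv11_6 : P16 ∣ (m - 1) * P3 * P4 * P8 * P9 * P12 * P16 * P18 * P24 * P36 * P48 := ⟨(m - 1) * P3 * P4 * P8 * P9 * P12 * P18 * P24 * P36 * P48, by ring⟩
  have hcr11_6 : P16 ∣ a11 - m ^ 10 := carry hdv11_6 hl11 hcr10_6
  have hdv11_7 : P18 ∣ (m - 1) * P3 * P4 * P8 * P9 * P12 * P16 * P18 * P24 * P36 * P48 := ⟨(m - 1) * P3 * P4 * P8 * P9 * P12 * P16 * P24 * P36 * P48, by ring⟩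
  have hcr11_7 : P18 ∣ a11 - m ^ 13 := carry hdv11_7 hl11 hcr10_7
  have hdv11_8 : P24 ∣ (m - 1) * P3 * P4 * P8 * P9 * P12 * P16 * P18 * P24 * P36 * P48 := ⟨(m - 1) * P3 * P4 * P8 * P9 * P12 * P16 * P18 * P36 * P48, by ring⟩
  have hcr11_8 : P24 ∣ a11 - m ^ 2 := carry hdv11_8 hl11 hcr10_8
  have hdv11_9 : P36 ∣ (m - 1) * P3 * P4 * P8 * P9 * P12 * P16 * P18 * P24 * P36 * P48 := ⟨(m - 1) * P3 * P4 * P8 * P9 * P12 * P16 * P18 * P24 * P48, by ring⟩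
  have hcr11_9 : P36 ∣ a11 - m ^ 1 := carry hdv11_9 hl11 hcr10_9
  have hdv11_10 : P48 ∣ (m - 1) * P3 * P4 * P8 * P9 * P12 * P16 * P18 * P24 * P36 * P48 := ⟨(m - 1) * P3 * P4 * P8 * P9 * P12 * P16 * P18 * P24 * P36, by ring⟩
  have hcr11_10 : P48 ∣ a11 - m ^ 34 := carry hdv11_10 hl11 hcr10_10
  have hA0 : (m - 1) ∣ a11 := by simpa using hcr11_0
  obtain ⟨k₀, hk₀⟩ := hA0
  have hQpos : (0:ℤ) < P3 * P4 * P8 * P9 * P12 * P16 * P18 * P24 * P36 * P48 * P6 := (mul_pos (mul_pos (mul_pos (mul_pos (mul_pos (mul_pos (mul_pos (mul_pos (mul_pos (mul_pos (by linarith : (0:ℤ) < P3) (by linarith : (0:ℤ) < P4)) (by linarith : (0:ℤ) < P8)) (by linarith : (0:ℤ) < P9)) (by linarith : (0:ℤ) < P12)) (by linarith : (0:ℤ) < P16)) (by linarith : (0:ℤ) < P18)) (by linarith : (0:ℤ) < P24)) (by linarith : (0:ℤ) < P36)) (by linarith : (0:ℤ) < P48)) (by linarith : (0:ℤ) < P6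))
  have hQ1 : (1:ℤ) ≤ P3 * P4 * P8 * P9 * P12 * P16 * P18 * P24 * P36 * P48 * P6 := by simpa using Int.lt_iff_add_one_le.mp hQpos
  have hXQ_3 : P3 ∣ P3 * P4 * P8 * P9 * P12 * P16 * P18 * P24 * P36 * P48 * P6 := ⟨P4 * P8 * P9 * P12 * P16 * P18 * P24 * P36 * P48 * P6, by ring⟩
  have hXQ_4 : P4 ∣ P3 * P4 * P8 * P9 * P12 * P16 * P18 * P24 * P36 * P48 * P6 := ⟨P3 * P8 * P9 * P12 * P16 * P18 * P24 * P36 * P48 * P6, by ring⟩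
  have hXQ_8 : P8 ∣ P3 * P4 * P8 * P9 * P12 * P16 * P18 * P24 * P36 * P48 * P6 := ⟨P3 * P4 * P9 * P12 * P16 * P18 * P24 * P36 * P48 * P6, by ring⟩
  have hXQ_9 : P9 ∣ P3 * P4 * P8 * P9 * P12 * P16 * P18 * P24 * P36 * P48 * P6 := ⟨P3 * P4 * P8 * P12 * P16 * P18 * P24 * P36 * P48 * P6, by ring⟩
  have hXQ_12 : P12 ∣ P3 * P4 * P8 * P9 * P12 * P16 * P18 * P24 * P36 * P48 * P6 := ⟨P3 * P4 * P8 * P9 * P16 * P18 * P24 * P36 * P48 * P6, by ring⟩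
  have hXQ_16 : P16 ∣ P3 * P4 * P8 * P9 * P12 * P16 * P18 * P24 * P36 * P48 * P6 := ⟨P3 * P4 * P8 * P9 * P12 * P18 * P24 * P36 * P48 * P6, by ring⟩
  have hXQ_18 : P18 ∣ P3 * P4 * P8 * P9 * P12 * P16 * P18 * P24 * P36 * P48 * P6 := ⟨P3 * P4 * P8 * P9 * P12 * P16 * P24 * P36 * P48 * P6, by ring⟩
  have hXQ_24 : P24 ∣ P3 * P4 * P8 * P9 * P12 * P16 * P18 * P24 * P36 * P48 * P6 := ⟨P3 * P4 * P8 * P9 * P12 * P16 * P18 * P36 * P48 * P6, by ring⟩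
  have hXQ_36 : P36 ∣ P3 * P4 * P8 * P9 * P12 * P16 * P18 * P24 * P36 * P48 * P6 := ⟨P3 * P4 * P8 * P9 * P12 * P16 * P18 * P24 * P48 * P6, by ring⟩
  have hXQ_48 : P48 ∣ P3 * P4 * P8 * P9 * P12 * P16 * P18 * P24 * P36 * P48 * P6 := ⟨P3 * P4 * P8 * P9 * P12 * P16 * P18 * P24 * P36 * P6, by ring⟩
  have hXQ_6 : P6 ∣ P3 * P4 * P8 * P9 * P12 * P16 * P18 * P24 * P36 * P48 * P6 := ⟨P3 * P4 * P8 * P9 * P12 * P16 * P18 * P24 * P36 * P48, by ring⟩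
  have hbound : ∀ j : ℕ, m ^ 144 + 1 ≤ k₀ + ((j:ℤ) + ((k₀.natAbs : ℤ) + m ^ 144 + 1)) * (P3 * P4 * P8 * P9 * P12 * P16 * P18 * P24 * P36 * P48 * P6) := by
    intro j
    have hjb : (0:ℤ) ≤ (j:ℤ) + ((k₀.natAbs : ℤ) + m ^ 144 + 1) := by positivity
    have hmul : ((j:ℤ) + ((k₀.natAbs : ℤ) + m ^ 144 + 1)) * 1 ≤ ((j:ℤ) + ((k₀.natAbs : ℤ) + m ^ 144 + 1)) * (P3 * P4 * P8 * P9 * P12 * P16 * P18 * P24 * P36 * P48 * P6) :=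
      mul_le_mul_of_nonneg_left hQ1 hjb
    have habs : -(k₀.natAbs : ℤ) ≤ k₀ := by omega
    have hj0 : (0:ℤ) ≤ (j:ℤ) := by positivity
    linarith
  refine Set.infinite_of_injective_forall_mem
    (f := fun j : ℕ => (k₀ + ((j:ℤ) + ((k₀.natAbs : ℤ) + m ^ 144 + 1)) * (P3 * P4 * P8 * P9 * P12 * P16 * P18 * P24 * P36 * P48 * P6)).toNat) ?_ ?_
  · intro j1 j2 hEq
    have e1 := hbound j1
    have e2 := hbound j2
    have c1 : (0:ℤ) ≤ k₀ + ((j1:ℤ) + ((k₀.natAbs : ℤ) + m ^ 144 + 1)) * (P3 * P4 * P8 * P9 * P12 * P16 * P18 * P24 * P36 * P48 * P6) := by linarith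
    have c2 : (0:ℤ) ≤ k₀ + ((j2:ℤ) + ((k₀.natAbs : ℤ) + m ^ 144 + 1)) * (P3 * P4 * P8 * P9 * P12 * P16 * P18 * P24 * P36 * P48 * P6) := by linarith
    have hEq' : (((k₀ + ((j1:ℤ) + ((k₀.natAbs : ℤ) + m ^ 144 + 1)) * (P3 * P4 * P8 * P9 * P12 * P16 * P18 * P24 * P36 * P48 * P6)).toNat : ℕ) : ℤ) =
        (((k₀ + ((j2:ℤ) + ((k₀.natAbs : ℤ) + m ^ 144 + 1)) * (P3 * P4 * P8 * P9 * P12 * P16 * P18 * P24 * P36 * P48 * P6)).toNat : ℕ) : ℤ) :=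
      congrArg (fun t : ℕ => (t : ℤ)) hEq
    rw [Int.toNat_of_nonneg c1, Int.toNat_of_nonneg c2] at hEq'
    have h5 : ((j1:ℤ) + ((k₀.natAbs : ℤ) + m ^ 144 + 1)) = ((j2:ℤ) + ((k₀.natAbs : ℤ) + m ^ 144 + 1)) :=
      mul_right_cancel₀ (ne_of_gt hQpos) (by linarith)
    have h6 : (j1:ℤ) = (j2:ℤ) := by linarith
    exact_mod_cast h6
  · intro j
    simp only [Set.mem_setOf_eq]
    obtain ⟨K, hK⟩ : ∃ K : ℤ, K = k₀ + ((j:ℤ) + ((k₀.natAbs : ℤ) + m ^ 144 + 1)) * (P3 * P4 * P8 * P9 * P12 * P16 * P18 * P24 * P36 * P48 * P6) := ⟨_, rfl⟩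
    rw [← hK]
    have hb : m ^ 144 + 1 ≤ K := by rw [hK]; exact hbound j
    have hKnn : (0:ℤ) ≤ K := by linarith
    have hK2 : (2:ℤ) ≤ K := by linarith
    have hcast : ((K.toNat : ℕ) : ℤ) = K := Int.toNat_of_nonneg hKnn
    constructor
    · omega
    · intro n hn
      rw [hcast]
      have hd3 : P3 ∣ K * (m - 1) - m ^ 0 := by
        have h1 : P3 ∣ ((j:ℤ) + ((k₀.natAbs : ℤ) + m ^ 144 + 1)) * (m - 1) * (P3 * P4 * P8 * P9 * P12 * P16 * P18 * P24 * P36 * P48 * P6) :=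
          dvd_mul_of_dvd_right hXQ_3 _
        have h2 := dvd_add hcr11_1 h1
        rwa [show a11 - m ^ 0 + ((j:ℤ) + ((k₀.natAbs : ℤ) + m ^ 144 + 1)) * (m - 1) * (P3 * P4 * P8 * P9 * P12 * P16 * P18 * P24 * P36 * P48 * P6) =
          K * (m - 1) - m ^ 0 from by rw [hK, hk₀]; ring] at h2
      have hd4 : P4 ∣ K * (m - 1) - m ^ 0 := by
        have h1 : P4 ∣ ((j:ℤ) + ((k₀.natAbs : ℤ) + m ^ 144 + 1)) * (m - 1) * (P3 * P4 * P8 * P9 * P12 * P16 * P18 * P24 * P36 * P48 * P6) :=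
          dvd_mul_of_dvd_right hXQ_4 _
        have h2 := dvd_add hcr11_2 h1
        rwa [show a11 - m ^ 0 + ((j:ℤ) + ((k₀.natAbs : ℤ) + m ^ 144 + 1)) * (m - 1) * (P3 * P4 * P8 * P9 * P12 * P16 * P18 * P24 * P36 * P48 * P6) =
          K * (m - 1) - m ^ 0 from by rw [hK, hk₀]; ring] at h2
      have hd8 : P8 ∣ K * (m - 1) - m ^ 6 := by
        have h1 : P8 ∣ ((j:ℤ) + ((k₀.natAbs : ℤ) + m ^ 144 + 1)) * (m - 1) * (P3 * P4 * P8 * P9 * P12 * P16 * P18 * P24 * P36 * P48 * P6) :=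
          dvd_mul_of_dvd_right hXQ_8 _
        have h2 := dvd_add hcr11_3 h1
        rwa [show a11 - m ^ 6 + ((j:ℤ) + ((k₀.natAbs : ℤ) + m ^ 144 + 1)) * (m - 1) * (P3 * P4 * P8 * P9 * P12 * P16 * P18 * P24 * P36 * P48 * P6) =
          K * (m - 1) - m ^ 6 from by rw [hK, hk₀]; ring] at h2
      have hd9 : P9 ∣ K * (m - 1) - m ^ 7 := by
        have h1 : P9 ∣ ((j:ℤ) + ((k₀.natAbs : ℤ) + m ^ 144 + 1)) * (m - 1) * (P3 * P4 * P8 * P9 * P12 * P16 * P18 * P24 * P36 * P48 * P6) :=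
          dvd_mul_of_dvd_right hXQ_9 _
        have h2 := dvd_add hcr11_4 h1
        rwa [show a11 - m ^ 7 + ((j:ℤ) + ((k₀.natAbs : ℤ) + m ^ 144 + 1)) * (m - 1) * (P3 * P4 * P8 * P9 * P12 * P16 * P18 * P24 * P36 * P48 * P6) =
          K * (m - 1) - m ^ 7 from by rw [hK, hk₀]; ring] at h2
      have hd12 : P12 ∣ K * (m - 1) - m ^ 7 := by
        have h1 : P12 ∣ ((j:ℤ) + ((k₀.natAbs : ℤ) + m ^ 144 + 1)) * (m - 1) * (P3 * P4 * P8 * P9 * P12 * P16 * P18 * P24 * P36 * P48 * P6) :=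
          dvd_mul_of_dvd_right hXQ_12 _
        have h2 := dvd_add hcr11_5 h1
        rwa [show a11 - m ^ 7 + ((j:ℤ) + ((k₀.natAbs : ℤ) + m ^ 144 + 1)) * (m - 1) * (P3 * P4 * P8 * P9 * P12 * P16 * P18 * P24 * P36 * P48 * P6) =
          K * (m - 1) - m ^ 7 from by rw [hK, hk₀]; ring] at h2
      have hd16 : P16 ∣ K * (m - 1) - m ^ 10 := by
        have h1 : P16 ∣ ((j:ℤ) + ((k₀.natAbs : ℤ) + m ^ 144 + 1)) * (m - 1) * (P3 * P4 * P8 * P9 * P12 * P16 * P18 * P24 * P36 * P48 * P6) :=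
          dvd_mul_of_dvd_right hXQ_16 _
        have h2 := dvd_add hcr11_6 h1
        rwa [show a11 - m ^ 10 + ((j:ℤ) + ((k₀.natAbs : ℤ) + m ^ 144 + 1)) * (m - 1) * (P3 * P4 * P8 * P9 * P12 * P16 * P18 * P24 * P36 * P48 * P6) =
          K * (m - 1) - m ^ 10 from by rw [hK, hk₀]; ring] at h2
      have hd18 : P18 ∣ K * (m - 1) - m ^ 13 := by
        have h1 : P18 ∣ ((j:ℤ) + ((k₀.natAbs : ℤ) + m ^ 144 + 1)) * (m - 1) * (P3 * P4 * P8 * P9 * P12 * P16 * P18 * P24 * P36 * P48 * P6) :=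
          dvd_mul_of_dvd_right hXQ_18 _
        have h2 := dvd_add hcr11_7 h1
        rwa [show a11 - m ^ 13 + ((j:ℤ) + ((k₀.natAbs : ℤ) + m ^ 144 + 1)) * (m - 1) * (P3 * P4 * P8 * P9 * P12 * P16 * P18 * P24 * P36 * P48 * P6) =
          K * (m - 1) - m ^ 13 from by rw [hK, hk₀]; ring] at h2
      have hd24 : P24 ∣ K * (m - 1) - m ^ 2 := by
        have h1 : P24 ∣ ((j:ℤ) + ((k₀.natAbs : ℤ) + m ^ 144 + 1)) * (m - 1) * (P3 * P4 * P8 * P9 * P12 * P16 * P18 * P24 * P36 * P48 * P6) :=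
          dvd_mul_of_dvd_right hXQ_24 _
        have h2 := dvd_add hcr11_8 h1
        rwa [show a11 - m ^ 2 + ((j:ℤ) + ((k₀.natAbs : ℤ) + m ^ 144 + 1)) * (m - 1) * (P3 * P4 * P8 * P9 * P12 * P16 * P18 * P24 * P36 * P48 * P6) =
          K * (m - 1) - m ^ 2 from by rw [hK, hk₀]; ring] at h2
      have hd36 : P36 ∣ K * (m - 1) - m ^ 1 := by
        have h1 : P36 ∣ ((j:ℤ) + ((k₀.natAbs : ℤ) + m ^ 144 + 1)) * (m - 1) * (P3 * P4 * P8 * P9 * P12 * P16 * P18 * P24 * P36 * P48 * P6) :=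
          dvd_mul_of_dvd_right hXQ_36 _
        have h2 := dvd_add hcr11_9 h1
        rwa [show a11 - m ^ 1 + ((j:ℤ) + ((k₀.natAbs : ℤ) + m ^ 144 + 1)) * (m - 1) * (P3 * P4 * P8 * P9 * P12 * P16 * P18 * P24 * P36 * P48 * P6) =
          K * (m - 1) - m ^ 1 from by rw [hK, hk₀]; ring] at h2
      have hd48 : P48 ∣ K * (m - 1) - m ^ 34 := by
        have h1 : P48 ∣ ((j:ℤ) + ((k₀.natAbs : ℤ) + m ^ 144 + 1)) * (m - 1) * (P3 * P4 * P8 * P9 * P12 * P16 * P18 * P24 * P36 * P48 * P6) :=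
          dvd_mul_of_dvd_right hXQ_48 _
        have h2 := dvd_add hcr11_10 h1
        rwa [show a11 - m ^ 34 + ((j:ℤ) + ((k₀.natAbs : ℤ) + m ^ 144 + 1)) * (m - 1) * (P3 * P4 * P8 * P9 * P12 * P16 * P18 * P24 * P36 * P48 * P6) =
          K * (m - 1) - m ^ 34 from by rw [hK, hk₀]; ring] at h2
      have hd6 : P6 ∣ K * (m - 1) - m ^ 5 := by
        have h1 : P6 ∣ ((j:ℤ) + ((k₀.natAbs : ℤ) + m ^ 144 + 1)) * (m - 1) * (P3 * P4 * P8 * P9 * P12 * P16 * P18 * P24 * P36 * P48 * P6) :=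
          dvd_mul_of_dvd_right hXQ_6 _
        have h2 := dvd_add hcr11_11 h1
        rwa [show a11 - m ^ 5 + ((j:ℤ) + ((k₀.natAbs : ℤ) + m ^ 144 + 1)) * (m - 1) * (P3 * P4 * P8 * P9 * P12 * P16 * P18 * P24 * P36 * P48 * P6) =
          K * (m - 1) - m ^ 5 from by rw [hK, hk₀]; ring] at h2
      have hm1 : (1:ℤ) ≤ m - 1 := by linarith
      have hmn : m ^ 1 ≤ m ^ n := pow_le_pow_right₀ (by linarith) hn
      have hK0 : (0:ℤ) ≤ K * (m - 1) := mul_nonneg hKnn (by linarith)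
      have hstep : K * (m - 1) * m ^ 1 ≤ K * (m - 1) * m ^ n :=
        mul_le_mul_of_nonneg_left hmn hK0
      have hmm2 : (2:ℤ) ≤ (m - 1) * m := by nlinarith
      have h2K : K * 2 ≤ K * ((m - 1) * m) := mul_le_mul_of_nonneg_left hmm2 hKnn
      have hassoc : K * ((m - 1) * m) = K * (m - 1) * m ^ 1 := by ring
      have hv1 : 1 < K * (m - 1) * m ^ n - 1 := by linarith
      have hvbig : m ^ 144 - 1 < K * (m - 1) * m ^ n - 1 := by linarith
      refine ⟨hv1, ?_⟩
      rcases coverage17 n with hc|hc|hc|hc|hc|hc|hc|hc|hc|hc|hc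
      · exact not_prime_of_divisor hP3gt
          (lt_of_le_of_lt (Int.le_of_dvd (by linarith) hE3) hvbig)
          (cover_dvd hD3 hd3 (by omega))
      · exact not_prime_of_divisor hP4gt
          (lt_of_le_of_lt (Int.le_of_dvd (by linarith) hE4) hvbig)
          (cover_dvd hD4 hd4 (by omega))
      · exact not_prime_of_divisor hP6gt
          (lt_of_le_of_lt (Int.le_of_dvd (by linarith) hE6) hvbig)
          (cover_dvd hD6 hd6 (by omega))
      · exact not_prime_of_divisor hP8gt
          (lt_of_le_of_lt (Int.le_of_dvd (by linarith) hE8) hvbig)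
          (cover_dvd hD8 hd8 (by omega))
      · exact not_prime_of_divisor hP9gt
          (lt_of_le_of_lt (Int.le_of_dvd (by linarith) hE9) hvbig)
          (cover_dvd hD9 hd9 (by omega))
      · exact not_prime_of_divisor hP12gt
          (lt_of_le_of_lt (Int.le_of_dvd (by linarith) hE12) hvbig)
          (cover_dvd hD12 hd12 (by omega))
      · exact not_prime_of_divisor hP16gt
          (lt_of_le_of_lt (Int.le_of_dvd (by linarith) hE16) hvbig)
          (cover_dvd hD16 hd16 (by omega))
      · exact not_prime_of_divisor hP18gt
          (lt_of_le_of_lt (Int.le_of_dvd (by linarith) hE18) hvbig)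
          (cover_dvd hD18 hd18 (by omega))
      · exact not_prime_of_divisor hP24gt
          (lt_of_le_of_lt (Int.le_of_dvd (by linarith) hE24) hvbig)
          (cover_dvd hD24 hd24 (by omega))
      · exact not_prime_of_divisor hP36gt
          (lt_of_le_of_lt (Int.le_of_dvd (by linarith) hE36) hvbig)
          (cover_dvd hD36 hd36 (by omega))
      · exact not_prime_of_divisor hP48gt
          (lt_of_le_of_lt (Int.le_of_dvd (by linarith) hE48) hvbig)
          (cover_dvd hD48 hd48 (by omega))
end

section
/- For any integer m ≥ 2, gcd(30, Φ_30(m)) = 1, where Φ_30(m) = m^8 + m^7 - m^5 - m^4 - m^3 + m + 1. -/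
open Polynomial Finset

private lemma cancel_poly {a b c d : ℤ[X]} (hc : c.eval 2 ≠ 0)
    (h1 : a * c = d) (h2 : b * c = d) : a = b :=
  mul_right_cancel₀ (fun h => hc (by simp [h])) (h1.trans h2.symm)

private lemma cyc30 : cyclotomic 30 ℤ =
    X ^ 8 + X ^ 7 - X ^ 5 - X ^ 4 - X ^ 3 + X + 1 := by
  have p1 := cyclotomic_one ℤ
  have p2 := cyclotomic_two ℤ
  have p3 := cyclotomic_three ℤ
  have prod5 : cyclotomic 1 ℤ * cyclotomic 5 ℤ = X ^ 5 - 1 := by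
    have h := prod_cyclotomic_eq_X_pow_sub_one (by norm_num : 0 < 5) ℤ
    have hd : Nat.divisors 5 = {1, 5} := by decide
    rw [hd] at h
    simpa [Finset.prod_insert, Finset.mem_insert] using h
  have p5 : cyclotomic 5 ℤ = X ^ 4 + X ^ 3 + X ^ 2 + X + 1 := by
    refine cancel_poly (c := X - 1) (d := X ^ 5 - 1) (by norm_num) ?_ (by ring)
    rw [← p1, mul_comm]; exact prod5
  have prod6 : cyclotomic 1 ℤ * cyclotomic 2 ℤ * cyclotomic 3 ℤ * cyclotomic 6 ℤ
      = X ^ 6 - 1 := by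
    have h := prod_cyclotomic_eq_X_pow_sub_one (by norm_num : 0 < 6) ℤ
    have hd : Nat.divisors 6 = {1, 2, 3, 6} := by decide
    rw [hd] at h
    rw [← h]
    simp [Finset.prod_insert, Finset.mem_insert]
    ring
  have p6 : cyclotomic 6 ℤ = X ^ 2 - X + 1 := by
    refine cancel_poly (c := (X - 1) * (X + 1) * (X ^ 2 + X + 1)) (d := X ^ 6 - 1)
      (by norm_num) ?_ (by ring)
    rw [show (cyclotomic 6 ℤ) * ((X - 1) * (X + 1) * (X ^ 2 + X + 1)) =
      (X - 1) * (X + 1) * (X ^ 2 + X + 1) * cyclotomic 6 ℤ by ring, ← p1, ← p2, ← p3]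
    exact prod6
  have prod10 : cyclotomic 1 ℤ * cyclotomic 2 ℤ * cyclotomic 5 ℤ * cyclotomic 10 ℤ
      = X ^ 10 - 1 := by
    have h := prod_cyclotomic_eq_X_pow_sub_one (by norm_num : 0 < 10) ℤ
    have hd : Nat.divisors 10 = {1, 2, 5, 10} := by decide
    rw [hd] at h
    rw [← h]
    simp [Finset.prod_insert, Finset.mem_insert]
    ring
  have p10 : cyclotomic 10 ℤ = X ^ 4 - X ^ 3 + X ^ 2 - X + 1 := by
    refine cancel_poly (c := (X - 1) * (X + 1) * (X ^ 4 + X ^ 3 + X ^ 2 + X + 1))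
      (d := X ^ 10 - 1) (by norm_num) ?_ (by ring)
    rw [show (cyclotomic 10 ℤ) * ((X - 1) * (X + 1) * (X ^ 4 + X ^ 3 + X ^ 2 + X + 1)) =
      (X - 1) * (X + 1) * (X ^ 4 + X ^ 3 + X ^ 2 + X + 1) * cyclotomic 10 ℤ by ring,
      ← p1, ← p2, ← p5]
    exact prod10
  have prod15 : cyclotomic 1 ℤ * cyclotomic 3 ℤ * cyclotomic 5 ℤ * cyclotomic 15 ℤ
      = X ^ 15 - 1 := by
    have h := prod_cyclotomic_eq_X_pow_sub_one (by norm_num : 0 < 15) ℤ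
    have hd : Nat.divisors 15 = {1, 3, 5, 15} := by decide
    rw [hd] at h
    rw [← h]
    simp [Finset.prod_insert, Finset.mem_insert]
    ring
  have p15 : cyclotomic 15 ℤ = X ^ 8 - X ^ 7 + X ^ 5 - X ^ 4 + X ^ 3 - X + 1 := by
    refine cancel_poly (c := (X - 1) * (X ^ 2 + X + 1) * (X ^ 4 + X ^ 3 + X ^ 2 + X + 1))
      (d := X ^ 15 - 1) (by norm_num) ?_ (by ring)
    rw [show (cyclotomic 15 ℤ) *
        ((X - 1) * (X ^ 2 + X + 1) * (X ^ 4 + X ^ 3 + X ^ 2 + X + 1)) =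
      (X - 1) * (X ^ 2 + X + 1) * (X ^ 4 + X ^ 3 + X ^ 2 + X + 1) * cyclotomic 15 ℤ by ring,
      ← p1, ← p3, ← p5]
    exact prod15
  have prod30 : cyclotomic 1 ℤ * cyclotomic 2 ℤ * cyclotomic 3 ℤ * cyclotomic 5 ℤ *
      cyclotomic 6 ℤ * cyclotomic 10 ℤ * cyclotomic 15 ℤ * cyclotomic 30 ℤ
      = X ^ 30 - 1 := by
    have h := prod_cyclotomic_eq_X_pow_sub_one (by norm_num : 0 < 30) ℤ
    have hd : Nat.divisors 30 = {1, 2, 3, 5, 6, 10, 15, 30} := by decide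
    rw [hd] at h
    rw [← h]
    simp [Finset.prod_insert, Finset.mem_insert]
    ring
  refine cancel_poly (c := (X - 1) * (X + 1) * (X ^ 2 + X + 1) *
    (X ^ 4 + X ^ 3 + X ^ 2 + X + 1) * (X ^ 2 - X + 1) * (X ^ 4 - X ^ 3 + X ^ 2 - X + 1) *
    (X ^ 8 - X ^ 7 + X ^ 5 - X ^ 4 + X ^ 3 - X + 1)) (d := X ^ 30 - 1)
    (by norm_num) ?_ (by ring)
  rw [mul_comm, ← p1, ← p2, ← p3, ← p5, ← p6, ← p10, ← p15]
  exact prod30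

theorem stmt_19 (m : ℤ) (hm : 2 ≤ m) :
    (cyclotomic 30 ℤ).eval m = m ^ 8 + m ^ 7 - m ^ 5 - m ^ 4 - m ^ 3 + m + 1 ∧
      Int.gcd 30 ((cyclotomic 30 ℤ).eval m) = 1 := by
  have hv : (cyclotomic 30 ℤ).eval m = m ^ 8 + m ^ 7 - m ^ 5 - m ^ 4 - m ^ 3 + m + 1 := by
    rw [cyc30]; simp
  refine ⟨hv, ?_⟩
  rw [hv]
  set n : ℤ := m ^ 8 + m ^ 7 - m ^ 5 - m ^ 4 - m ^ 3 + m + 1 with hn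
  rw [show (30 : ℤ) = 2 * 3 * 5 by norm_num, ← Int.isCoprime_iff_gcd_eq_one]
  have key : ∀ p : ℕ, (∀ a : ZMod p, a ^ 8 + a ^ 7 - a ^ 5 - a ^ 4 - a ^ 3 + a + 1 ≠ 0) →
      ¬ ((p : ℤ) ∣ n) := by
    intro p hp h
    have h' : ((n : ZMod p)) = 0 := (ZMod.intCast_zmod_eq_zero_iff_dvd n p).mpr h
    apply hp (m : ZMod p)
    rw [hn] at h'; push_cast at h'; exact h'
  have h2 : ¬ ((2 : ℤ) ∣ n) := by exact_mod_cast key 2 (by decide)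
  have h3 : ¬ ((3 : ℤ) ∣ n) := by exact_mod_cast key 3 (by decide)
  have h5 : ¬ ((5 : ℤ) ∣ n) := by exact_mod_cast key 5 (by decide)
  exact ((Int.prime_two.coprime_iff_not_dvd.mpr h2).mul_left
    (Int.prime_three.coprime_iff_not_dvd.mpr h3)).mul_left
    (((by norm_num : Prime (5:ℤ)).coprime_iff_not_dvd.mpr h5))
end
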